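/- arXiv:2309.14513 — 3 statements merged into one kernel-verified Lean document; each statement's English description precedes it below -/
import Mathlib

section
/- Let G=(V,E) be an undirected graph and h an integer-valued intersecting supermodular set function on the subsets of V with h(V)=0. There exists an orientation of the edges of G such that the resulting digraph satisfies d^-(X) ≥ h(X) for every nonempty subset X of V, if and only if e_E(𝒫) ≥ Σ_{X∈𝒫} h(X) for every subpartition 𝒫 of V. (Frank's orientation theorem) -/
/- Common definitions for formalizing packing-of-arborescences theorems.

Conventions:
* A digraph on a finite vertex type `V` is given by a finite multiset of arcs
  `A : Multiset (V × V)`, an arc `(u, v)` having tail `u` and head `v`.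
* An undirected (multi)graph is given by a multiset of edges `E : Multiset (V × V)`,
  an edge being recorded as an (arbitrarily ordered) pair of its endpoints.
* A multiset `S` of vertices (e.g. of roots) is given by a finite index type `S`
  together with a placement map `π : S → V`; the multiplicity of a vertex `v` is
  the size of the fiber over `v`.
* A dypergraph is given by a multiset `𝒜 : Multiset (Finset V × V)` of dyperedges
  `(Z, z)` with tail set `Z` and head `z`; a hypergraph by a multiset
  `ℰ : Multiset (Finset V)` of hyperedges. -/

attribute [local instance] Classical.propDecidable

noncomputable section

namespace ArborPaper

variable {V : Type*} [Fintype V] [DecidableEq V]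

/-- An arc `a = (u, v)` (tail `u`, head `v`) enters `X` if its head is in `X`
and its tail is outside. -/
def arcEnters (a : V × V) (X : Finset V) : Prop := a.2 ∈ X ∧ a.1 ∉ X

/-- An undirected edge (given by a pair of endpoints) enters `X` if exactly one of
its endpoints is in `X`. -/
def edgeEnters (e : V × V) (X : Finset V) : Prop :=
  (e.1 ∈ X ∧ e.2 ∉ X) ∨ (e.2 ∈ X ∧ e.1 ∉ X)

/-- The in-degree `d⁻_A(X)` of a vertex set `X`. -/
def inDeg (A : Multiset (V × V)) (X : Finset V) : ℕ :=
  (A.filter fun a => arcEnters a X).card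

/-- The in-degree of a single vertex. -/
def inDegV (A : Multiset (V × V)) (v : V) : ℕ :=
  (A.filter fun a => a.2 = v).card

/-- Reachability by a directed path using the arcs of `A`. -/
def Reaches (A : Multiset (V × V)) (u v : V) : Prop :=
  Relation.ReflTransGen (fun x y => (x, y) ∈ A) u v

/-- `P_D^X` : the set of vertices from which some vertex of `X` is reachable. -/
def PD (A : Multiset (V × V)) (X : Finset V) : Finset V :=
  Finset.univ.filter fun u => ∃ v ∈ X, Reaches A u v

/-- `Q_D^X` : the set of vertices reachable from some vertex of `X`. -/
def QD (A : Multiset (V × V)) (X : Finset V) : Finset V :=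
  Finset.univ.filter fun v => ∃ u ∈ X, Reaches A u v

/-- `C` is a strongly connected component of the digraph `(V, A)`. -/
def IsSCCD (A : Multiset (V × V)) (C : Finset V) : Prop :=
  ∃ v : V, C = Finset.univ.filter fun u => Reaches A u v ∧ Reaches A v u

/-- `B` is an `s`-arborescence with vertex set `U` : all arcs lie inside `U`,
every vertex of `U` other than `s` has in-degree exactly `1`, the root has
in-degree `0`, and every vertex of `U` is reachable from `s`
(equivalently: no circuit and all in-degrees of non-root vertices equal `1`). -/
def IsArborOn (B : Multiset (V × V)) (U : Finset V) (s : V) : Prop :=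
  s ∈ U ∧ (∀ a ∈ B, a.1 ∈ U ∧ a.2 ∈ U) ∧
  (∀ v ∈ U, v ≠ s → inDegV B v = 1) ∧ inDegV B s = 0 ∧
  ∀ v ∈ U, Reaches B s v

/-- `B` is a spanning `s`-arborescence (vertex set all of `V`). -/
def IsSpanningArbor (B : Multiset (V × V)) (s : V) : Prop :=
  IsArborOn B Finset.univ s

/-- One step along a mixed graph: an arc of `A`, or an edge of `E` in either direction. -/
def MStep (E A : Multiset (V × V)) (u v : V) : Prop :=
  (u, v) ∈ A ∨ (u, v) ∈ E ∨ (v, u) ∈ E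

/-- Reachability by a mixed path in the mixed graph `(V, E ∪ A)`. -/
def MReaches (E A : Multiset (V × V)) (u v : V) : Prop :=
  Relation.ReflTransGen (MStep E A) u v

/-- `P_F^X` for a mixed graph `F = (V, E ∪ A)`. -/
def PF (E A : Multiset (V × V)) (X : Finset V) : Finset V :=
  Finset.univ.filter fun u => ∃ v ∈ X, MReaches E A u v

/-- `Q_F^X` for a mixed graph `F = (V, E ∪ A)`. -/
def QF (E A : Multiset (V × V)) (X : Finset V) : Finset V :=
  Finset.univ.filter fun v => ∃ u ∈ X, MReaches E A u v

/-- `C` is a strongly connected component of the mixed graph `(V, E ∪ A)`. -/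
def IsSCC (E A : Multiset (V × V)) (C : Finset V) : Prop :=
  ∃ v : V, C = Finset.univ.filter fun u => MReaches E A u v ∧ MReaches E A v u

/-- `e_{E∪A}(𝒫)` : the number of edges of `E` and arcs of `A` entering at least one
member of the family `P`. -/
def eMixed (E A : Multiset (V × V)) (P : Finset (Finset V)) : ℕ :=
  (E.filter fun e => ∃ X ∈ P, edgeEnters e X).card +
  (A.filter fun a => ∃ X ∈ P, arcEnters a X).card

/-- A subpartition of `V` : a set of pairwise disjoint nonempty subsets. -/
def IsSubpartition (P : Finset (Finset V)) : Prop :=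
  (∀ X ∈ P, X.Nonempty) ∧ ∀ X ∈ P, ∀ Y ∈ P, X ≠ Y → Disjoint X Y

/-- `Eo` is an orientation of the multiset `E` of undirected edges: each edge is
kept or swapped. -/
def IsOrientationOf (E Eo : Multiset (V × V)) : Prop :=
  Multiset.Rel (fun e a => a = e ∨ a = Prod.swap e) E Eo

/-- The rank function of a matroid on a finite ground type `S`. -/
structure RankFn (S : Type*) [Fintype S] [DecidableEq S] where
  r : Finset S → ℕ
  rank_le_card : ∀ X : Finset S, r X ≤ X.card
  mono : ∀ ⦃X Y : Finset S⦄, X ⊆ Y → r X ≤ r Y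
  submodular : ∀ X Y : Finset S, r (X ∪ Y) + r (X ∩ Y) ≤ r X + r Y

/-- `B` is a basis of `T` in the matroid with rank function `M` : an independent
subset of `T` of full rank in `T`. -/
def RankFn.IsBasisOf {S : Type*} [Fintype S] [DecidableEq S] (M : RankFn S)
    (B T : Finset S) : Prop :=
  B ⊆ T ∧ M.r B = B.card ∧ M.r B = M.r T

/-- A dyperedge `a = (Z, z)` enters `X` if its head `z` is in `X` and some tail
vertex lies outside `X`. -/
def dypEnters (a : Finset V × V) (X : Finset V) : Prop :=
  a.2 ∈ X ∧ (a.1 \ X).Nonempty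

/-- The in-degree `d⁻_𝒜(X)` in a dypergraph. -/
def dypInDeg (𝒜 : Multiset (Finset V × V)) (X : Finset V) : ℕ :=
  (𝒜.filter fun a => dypEnters a X).card

/-- A hyperedge `e` enters `X` if it meets both `X` and its complement. -/
def hypEnters (e X : Finset V) : Prop := (e ∩ X).Nonempty ∧ (e \ X).Nonempty

/-- `e_{ℰ∪𝒜}(𝒫)` for a mixed hypergraph: the number of hyperedges of `ℰ` and
dyperedges of `𝒜` entering at least one member of `P`. -/
def eMH (ℰ : Multiset (Finset V)) (𝒜 : Multiset (Finset V × V))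
    (P : Finset (Finset V)) : ℕ :=
  (ℰ.filter fun e => ∃ X ∈ P, hypEnters e X).card +
  (𝒜.filter fun a => ∃ X ∈ P, dypEnters a X).card

/-- `B` is obtained from the multiset `𝒵` of dyperedges by trimming each
dyperedge `(Z, z)` to an arc `(y, z)` with `y ∈ Z`. -/
def Trims (𝒵 : Multiset (Finset V × V)) (B : Multiset (V × V)) : Prop :=
  Multiset.Rel (fun a b => b.2 = a.2 ∧ b.1 ∈ a.1) 𝒵 B

/-- `𝒟` is an orientation of the multiset `ℰ` of hyperedges: each hyperedge `X`
is replaced by a dyperedge `(X − x, x)` for some `x ∈ X`. -/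
def Orients (ℰ : Multiset (Finset V)) (𝒟 : Multiset (Finset V × V)) : Prop :=
  Multiset.Rel (fun e a => a.2 ∈ e ∧ a.1 = e.erase a.2) ℰ 𝒟

/-
Necessity: an arc enters at most one member of a subpartition, and only if its edge enters it.

Sufficiency, by induction on the number of edges: orienting an edge `e` as an arc `a` and passing
to `h - [a enters ·]` keeps `h` intersecting supermodular, so it suffices that some orientation of
`e` preserves the subpartition condition for the remaining edges `E`. If `u → v` fails at `P₁`
and `v → u` fails at `P₂`, then `v ∉ ⋃ P₁`, `u ∉ ⋃ P₂` and `Σ_{Pᵢ} h > e_E(Pᵢ)`. Uncrossing `P₁`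
and `P₂` (merge each `X ∈ P₁` with the members of `P₂` it meets) gives subpartitions `K` of
intersections and `F` of unions with `Σ_{P₁} h + Σ_{P₂} h ≤ Σ_K h + Σ_F h` and, edge by edge,
`e_E(K) + e_E(F) ≤ e_E(P₁) + e_E(P₂)`. Since `e` enters no member of `K`, the condition for `K`
and `F` contradicts the two failures.
-/

end ArborPaper

namespace ArborPaper

variable {V : Type*}

def IsIntersectingSupermodular [DecidableEq V] (h : Finset V → ℤ) : Prop :=
  ∀ X Y : Finset V, (X ∩ Y).Nonempty → h X + h Y ≤ h (X ∩ Y) + h (X ∪ Y)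

theorem boole_add_boole_le {p q r s : Prop} [Decidable p] [Decidable q] [Decidable r]
    [Decidable s] (hpq : p → q → r ∧ s) (hp : p → r ∨ s)
    (hq : q → r ∨ s) :
    ((if p then 1 else 0) + (if q then 1 else 0) : ℕ) ≤
      (if r then 1 else 0) + if s then 1 else 0 := by
  split_ifs <;> simp_all

section Subpartition

variable {P K₁ K₂ : Finset (Finset V)}

theorem IsSubpartition.eq_of_mem_of_mem (hP : IsSubpartition P) {X Y : Finset V} {a : V}
    (hX : X ∈ P) (hY : Y ∈ P) (haX : a ∈ X) (haY : a ∈ Y) : X = Y :=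
  by_contra fun hne => Finset.disjoint_left.1 (hP.2 X hX Y hY hne) haX haY

theorem IsSubpartition.mono (hP : IsSubpartition P) {Q : Finset (Finset V)} (hQ : Q ⊆ P) :
    IsSubpartition Q :=
  ⟨fun X hX => hP.1 X (hQ hX), fun X hX Y hY => hP.2 X (hQ hX) Y (hQ hY)⟩

theorem IsSubpartition.pairwiseDisjoint (hP : IsSubpartition P) :
    (P : Set (Finset V)).PairwiseDisjoint id :=
  fun X hX Y hY => hP.2 X hX Y hY

theorem isSubpartition_empty : IsSubpartition (∅ : Finset (Finset V)) := by
  simp [IsSubpartition]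

theorem isSubpartition_singleton {X : Finset V} (hX : X.Nonempty) : IsSubpartition {X} := by
  simp [IsSubpartition, hX]

theorem IsSubpartition.union [DecidableEq V] (h₁ : IsSubpartition K₁) (h₂ : IsSubpartition K₂)
    (hdisj : ∀ M₁ ∈ K₁, ∀ M₂ ∈ K₂, Disjoint M₁ M₂) : IsSubpartition (K₁ ∪ K₂) := by
  refine ⟨fun M hM => (Finset.mem_union.1 hM).elim (h₁.1 M) (h₂.1 M), ?_⟩
  intro M hM N hN hne
  rcases Finset.mem_union.1 hM with hM | hM <;> rcases Finset.mem_union.1 hN with hN | hN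
  exacts [h₁.2 M hM N hN hne, hdisj M hM N hN, (hdisj N hN M hM).symm, h₂.2 M hM N hN hne]

theorem IsSubpartition.sum_union [DecidableEq V] (h₁ : IsSubpartition K₁)
    (hdisj : ∀ M₁ ∈ K₁, ∀ M₂ ∈ K₂, Disjoint M₁ M₂) (h : Finset V → ℤ) :
    ∑ M ∈ K₁ ∪ K₂, h M = ∑ M ∈ K₁, h M + ∑ M ∈ K₂, h M := by
  refine Finset.sum_union (Finset.disjoint_left.2 fun M hM₁ hM₂ => ?_)
  obtain ⟨a, ha⟩ := h₁.1 M hM₁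
  exact Finset.disjoint_left.1 (hdisj M hM₁ M hM₂) ha ha

end Subpartition

section Entering

theorem edgeEnters_swap (e : V × V) (X : Finset V) : edgeEnters e.swap X ↔ edgeEnters e X :=
  Or.comm

theorem edgeEnters_of_arcEnters {a e : V × V} (hae : a = e ∨ a = e.swap) {X : Finset V}
    (ha : arcEnters a X) : edgeEnters e X := by
  rcases hae with rfl | rfl
  exacts [Or.inr ha, Or.inl ha]

theorem arcEnters_inter_add_arcEnters_union_le [DecidableEq V] (a : V × V) (X Y : Finset V) :
    ((if arcEnters a (X ∩ Y) then 1 else 0) + (if arcEnters a (X ∪ Y) then 1 else 0) : ℤ) ≤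
      (if arcEnters a X then 1 else 0) + if arcEnters a Y then 1 else 0 := by
  simp only [arcEnters, Finset.mem_inter, Finset.mem_union]
  by_cases a.1 ∈ X <;> by_cases a.1 ∈ Y <;> by_cases a.2 ∈ X <;> by_cases a.2 ∈ Y <;> simp [*]

theorem IsIntersectingSupermodular.sub_arcEnters [DecidableEq V] {h : Finset V → ℤ}
    (hh : IsIntersectingSupermodular h) (a : V × V) :
    IsIntersectingSupermodular fun X => h X - if arcEnters a X then 1 else 0 := fun X Y hXY => by
  linarith [hh X Y hXY, arcEnters_inter_add_arcEnters_union_le a X Y]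

theorem inDeg_cons (a : V × V) (A : Multiset (V × V)) (X : Finset V) :
    inDeg (a ::ₘ A) X = inDeg A X + if arcEnters a X then 1 else 0 := by
  simp only [inDeg, ← Multiset.countP_eq_card_filter, Multiset.countP_cons]

theorem eMixed_cons_zero (e : V × V) (E : Multiset (V × V)) (P : Finset (Finset V)) :
    eMixed (e ::ₘ E) 0 P = eMixed E 0 P + if ∃ X ∈ P, edgeEnters e X then 1 else 0 := by
  simp only [eMixed, ← Multiset.countP_eq_card_filter, Multiset.countP_cons]
  omega

theorem IsSubpartition.sum_arcEnters_le {P : Finset (Finset V)} (hP : IsSubpartition P)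
    {a e : V × V} (hae : a = e ∨ a = e.swap) :
    (∑ X ∈ P, if arcEnters a X then 1 else 0) ≤ if ∃ X ∈ P, edgeEnters e X then 1 else 0 := by
  rw [Finset.sum_boole, Nat.cast_id]
  split_ifs with he
  · exact Finset.card_le_one.2 fun X hX Y hY => by
      rw [Finset.mem_filter] at hX hY
      exact hP.eq_of_mem_of_mem hX.1 hY.1 hX.2.1 hY.2.1
  · refine (Finset.card_eq_zero.2 (Finset.filter_eq_empty_iff.2 fun X hX ha => ?_)).le
    exact he ⟨X, hX, edgeEnters_of_arcEnters hae ha⟩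

theorem sum_inDeg_le_eMixed {E Eo : Multiset (V × V)} (hEo : IsOrientationOf E Eo)
    {P : Finset (Finset V)} (hP : IsSubpartition P) :
    ∑ X ∈ P, inDeg Eo X ≤ eMixed E 0 P := by
  induction hEo with
  | zero => simp [inDeg, eMixed]
  | cons hae _ ih =>
    simp only [inDeg_cons, eMixed_cons_zero, Finset.sum_add_distrib]
    exact add_le_add ih (hP.sum_arcEnters_le hae)

end Entering

section Merge

variable [DecidableEq V] {X O : Finset V} {B : Finset (Finset V)}

theorem IsIntersectingSupermodular.add_sum_le {h : Finset V → ℤ}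
    (hh : IsIntersectingSupermodular h) (X : Finset V) {Ys : Finset (Finset V)}
    (hYs : (Ys : Set (Finset V)).PairwiseDisjoint id) (hmeet : ∀ Y ∈ Ys, (X ∩ Y).Nonempty) :
    h X + ∑ Y ∈ Ys, h Y ≤ ∑ Y ∈ Ys, h (X ∩ Y) + h (X ∪ Ys.sup id) := by
  induction Ys using Finset.induction_on with
  | empty => simp
  | @insert Y Ys hY ih =>
    rw [Finset.coe_insert, Set.pairwiseDisjoint_insert] at hYs
    have hdisj : Disjoint (Ys.sup id) Y := Finset.disjoint_sup_left.2 fun Y' hY' =>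
      (hYs.2 Y' hY' (ne_of_mem_of_not_mem hY' hY).symm).symm
    have hinter : (X ∪ Ys.sup id) ∩ Y = X ∩ Y := by
      rw [Finset.union_inter_distrib_right, Finset.disjoint_iff_inter_eq_empty.1 hdisj,
        Finset.union_empty]
    have hunion : X ∪ Ys.sup id ∪ Y = X ∪ (insert Y Ys).sup id := by
      rw [Finset.sup_insert, id, Finset.sup_eq_union, Finset.union_comm Y, Finset.union_assoc]
    have hstep := hh (X ∪ Ys.sup id) Y (hinter ▸ hmeet Y (Finset.mem_insert_self Y Ys))
    rw [hinter, hunion] at hstep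
    rw [Finset.sum_insert hY, Finset.sum_insert hY]
    linarith [ih hYs.1 fun Y' hY' => hmeet Y' (Finset.mem_insert_of_mem hY')]

def merge (X : Finset V) (B : Finset (Finset V)) : Finset (Finset V) :=
  insert (X ∪ (B.filter fun Y => ¬Disjoint X Y).sup id) (B.filter fun Y => Disjoint X Y)

def trace (X : Finset V) (B : Finset (Finset V)) : Finset (Finset V) :=
  (B.filter fun Y => ¬Disjoint X Y).image (X ∩ ·)

theorem exists_superset_mem_merge (hO : O = X ∨ O ∈ B) : ∃ O' ∈ merge X B, O ⊆ O' := by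
  by_cases hOB : O ∈ B ∧ Disjoint X O
  · exact ⟨O, Finset.mem_insert_of_mem (Finset.mem_filter.2 hOB), subset_rfl⟩
  refine ⟨_, Finset.mem_insert_self _ _, ?_⟩
  rcases hO with rfl | hO
  · exact Finset.subset_union_left
  · exact (Finset.le_sup (f := id) (Finset.mem_filter.2 ⟨hO, fun h => hOB ⟨hO, h⟩⟩)).trans
      Finset.subset_union_right

theorem mem_or_exists_of_mem_merge (hO : O ∈ merge X B) {a : V} (ha : a ∈ O) :
    a ∈ X ∨ ∃ Y ∈ B, a ∈ Y ∧ Y ⊆ O := by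
  rcases Finset.mem_insert.1 hO with rfl | hO
  · rcases Finset.mem_union.1 ha with ha | ha
    · exact Or.inl ha
    · obtain ⟨Y, hY, haY⟩ := Finset.mem_sup.1 ha
      exact Or.inr ⟨Y, (Finset.mem_filter.1 hY).1, haY,
        (Finset.le_sup (f := id) hY).trans Finset.subset_union_right⟩
  · exact Or.inr ⟨O, (Finset.mem_filter.1 hO).1, ha, subset_rfl⟩

theorem isSubpartition_merge (hB : IsSubpartition B) (hX : X.Nonempty) :
    IsSubpartition (merge X B) := by
  have hZ : ∀ W ∈ B.filter (fun Y => Disjoint X Y),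
      Disjoint (X ∪ (B.filter fun Y => ¬Disjoint X Y).sup id) W := by
    intro W hW
    rw [Finset.mem_filter] at hW
    refine Finset.disjoint_union_left.2 ⟨hW.2, Finset.disjoint_sup_left.2 fun Y hY => ?_⟩
    rw [Finset.mem_filter] at hY
    exact hB.2 Y hY.1 W hW.1 fun hYW => hY.2 (hYW ▸ hW.2)
  have hBX : IsSubpartition (B.filter fun Y => Disjoint X Y) := hB.mono (Finset.filter_subset _ _)
  refine ⟨fun W hW => ?_, fun W₁ h₁ W₂ h₂ hne => ?_⟩
  · rcases Finset.mem_insert.1 hW with rfl | hW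
    exacts [hX.mono Finset.subset_union_left, hBX.1 W hW]
  · rcases Finset.mem_insert.1 h₁ with rfl | h₁ <;> rcases Finset.mem_insert.1 h₂ with rfl | h₂
    exacts [absurd rfl hne, hZ W₂ h₂, (hZ W₁ h₁).symm, hBX.2 W₁ h₁ W₂ h₂ hne]

theorem isSubpartition_trace (hB : IsSubpartition B) : IsSubpartition (trace X B) := by
  simp only [trace, IsSubpartition, Finset.forall_mem_image, Finset.mem_filter]
  refine ⟨fun Y hY => Finset.not_disjoint_iff_nonempty_inter.1 hY.2, fun Y₁ h₁ Y₂ h₂ hne => ?_⟩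
  exact (hB.2 Y₁ h₁.1 Y₂ h₂.1 fun h => hne (h ▸ rfl)).mono Finset.inter_subset_right
    Finset.inter_subset_right

theorem sum_trace (hB : IsSubpartition B) (h : Finset V → ℤ) :
    ∑ M ∈ trace X B, h M = ∑ Y ∈ B.filter (fun Y => ¬Disjoint X Y), h (X ∩ Y) := by
  refine Finset.sum_image fun Y₁ h₁ Y₂ h₂ heq => ?_
  rw [Finset.coe_filter, Set.mem_ofPred_eq] at h₁ h₂
  obtain ⟨a, ha⟩ := Finset.not_disjoint_iff_nonempty_inter.1 h₁.2
  have ha₂ : a ∈ X ∩ Y₂ := heq ▸ ha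
  exact hB.eq_of_mem_of_mem h₁.1 h₂.1 (Finset.mem_inter.1 ha).2 (Finset.mem_inter.1 ha₂).2

theorem IsIntersectingSupermodular.add_sum_le_sum_trace_add_sum_merge {h : Finset V → ℤ}
    (hh : IsIntersectingSupermodular h) (hB : IsSubpartition B) (hX : X.Nonempty) :
    h X + ∑ Y ∈ B, h Y ≤ ∑ M ∈ trace X B, h M + ∑ Y ∈ merge X B, h Y := by
  have hnot : X ∪ (B.filter fun Y => ¬Disjoint X Y).sup id ∉ B.filter fun Y => Disjoint X Y :=
    fun hmem => hX.ne_empty <| Finset.disjoint_self_iff_empty X |>.1 <|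
      (Finset.mem_filter.1 hmem).2.mono_right Finset.subset_union_left
  have hmeet : ∀ Y ∈ B.filter (fun Y => ¬Disjoint X Y), (X ∩ Y).Nonempty := fun Y hY =>
    Finset.not_disjoint_iff_nonempty_inter.1 (Finset.mem_filter.1 hY).2
  calc h X + ∑ Y ∈ B, h Y
      = h X + ∑ Y ∈ B.filter (fun Y => ¬Disjoint X Y), h Y
          + ∑ Y ∈ B.filter (fun Y => Disjoint X Y), h Y := by
        rw [add_assoc, add_comm (∑ Y ∈ _, h Y), Finset.sum_filter_add_sum_filter_not]
    _ ≤ ∑ Y ∈ B.filter (fun Y => ¬Disjoint X Y), h (X ∩ Y)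
          + h (X ∪ (B.filter fun Y => ¬Disjoint X Y).sup id)
          + ∑ Y ∈ B.filter (fun Y => Disjoint X Y), h Y := by
        linarith [hh.add_sum_le X
          (hB.pairwiseDisjoint.subset (Finset.coe_subset.2 (Finset.filter_subset _ _))) hmeet]
    _ = ∑ M ∈ trace X B, h M + ∑ Y ∈ merge X B, h Y := by
        rw [sum_trace hB, merge, Finset.sum_insert hnot, add_assoc]

end Merge

section Uncrossing

variable [DecidableEq V] {A B K F : Finset (Finset V)}

-- `K` stands for the intersections `X ∩ Y` and `F` for the unions; since merging replaces members
-- of `B` by unions, a member of `K` is in general the trace of `X` on a union of members of `B`.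
structure IsUncrossing (A B K F : Finset (Finset V)) : Prop where
  isSubpartition_inters : IsSubpartition K
  isSubpartition_unions : IsSubpartition F
  exists_superset : ∀ O ∈ A ∪ B, ∃ U ∈ F, O ⊆ U
  exists_mem : ∀ U ∈ F, ∀ a ∈ U, ∃ O ∈ A ∪ B, a ∈ O
  exists_inter_subset : ∀ M ∈ K, ∃ X ∈ A, M ⊆ X ∧ ∀ a ∈ M, ∃ Y ∈ B, a ∈ Y ∧ X ∩ Y ⊆ M

theorem isUncrossing_empty (hB : IsSubpartition B) : IsUncrossing ∅ B ∅ B where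
  isSubpartition_inters := isSubpartition_empty
  isSubpartition_unions := hB
  exists_superset O hO := ⟨O, by simpa using hO, subset_rfl⟩
  exists_mem U hU a ha := ⟨U, by simpa using hU, ha⟩
  exists_inter_subset M hM := absurd hM (Finset.notMem_empty M)

theorem IsUncrossing.forall_disjoint_trace {X : Finset V} (hA : IsSubpartition A) (hX : X ∈ A)
    (hu : IsUncrossing (A.erase X) (merge X B) K F) :
    ∀ M ∈ K, ∀ N ∈ trace X B, Disjoint M N := by
  intro M hM N hN
  obtain ⟨X', hX', hMX', -⟩ := hu.exists_inter_subset M hM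
  obtain ⟨Y, -, rfl⟩ := Finset.mem_image.1 hN
  exact (hA.2 X' (Finset.mem_of_mem_erase hX') X hX (Finset.ne_of_mem_erase hX')).mono hMX'
    Finset.inter_subset_left

theorem IsUncrossing.of_erase_merge {X : Finset V} (hA : IsSubpartition A) (hX : X ∈ A)
    (hB : IsSubpartition B) (hu : IsUncrossing (A.erase X) (merge X B) K F) :
    IsUncrossing A B (K ∪ trace X B) F where
  isSubpartition_inters :=
    hu.isSubpartition_inters.union (isSubpartition_trace hB) (hu.forall_disjoint_trace hA hX)
  isSubpartition_unions := hu.isSubpartition_unions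
  exists_superset O hO := by
    by_cases hOA : O ∈ A.erase X
    · exact hu.exists_superset O (Finset.mem_union_left _ hOA)
    have hO' : O = X ∨ O ∈ B := by
      rw [Finset.mem_union] at hO
      rw [Finset.mem_erase] at hOA
      tauto
    obtain ⟨O', hO', hOO'⟩ := exists_superset_mem_merge hO'
    obtain ⟨U, hU, hO'U⟩ := hu.exists_superset O' (Finset.mem_union_right _ hO')
    exact ⟨U, hU, hOO'.trans hO'U⟩
  exists_mem U hU a ha := by
    obtain ⟨O, hO, haO⟩ := hu.exists_mem U hU a ha
    rcases Finset.mem_union.1 hO with hO | hO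
    · exact ⟨O, Finset.mem_union_left _ (Finset.mem_of_mem_erase hO), haO⟩
    rcases mem_or_exists_of_mem_merge hO haO with haX | ⟨Y, hY, haY, -⟩
    exacts [⟨X, Finset.mem_union_left _ hX, haX⟩, ⟨Y, Finset.mem_union_right _ hY, haY⟩]
  exists_inter_subset M hM := by
    rcases Finset.mem_union.1 hM with hM | hM
    · obtain ⟨X', hX', hMX', hsep⟩ := hu.exists_inter_subset M hM
      refine ⟨X', Finset.mem_of_mem_erase hX', hMX', fun a ha => ?_⟩
      obtain ⟨O, hO, haO, hX'O⟩ := hsep a ha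
      rcases mem_or_exists_of_mem_merge hO haO with haX | ⟨Y, hY, haY, hYO⟩
      · exact absurd (hMX' ha) (Finset.disjoint_left.1
          (hA.2 X' (Finset.mem_of_mem_erase hX') X hX (Finset.ne_of_mem_erase hX')) · haX)
      · exact ⟨Y, hY, haY, (Finset.inter_subset_inter_left hYO).trans hX'O⟩
    · obtain ⟨Y, hY, rfl⟩ := Finset.mem_image.1 hM
      exact ⟨X, hX, Finset.inter_subset_left, fun a ha =>
        ⟨Y, (Finset.mem_filter.1 hY).1, (Finset.mem_inter.1 ha).2, subset_rfl⟩⟩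

theorem IsIntersectingSupermodular.exists_isUncrossing {h : Finset V → ℤ}
    (hh : IsIntersectingSupermodular h) (hA : IsSubpartition A) (hB : IsSubpartition B) :
    ∃ K F, IsUncrossing A B K F ∧
      ∑ X ∈ A, h X + ∑ Y ∈ B, h Y ≤ ∑ M ∈ K, h M + ∑ U ∈ F, h U := by
  induction A using Finset.strongInduction generalizing B with
  | H A ih =>
  obtain rfl | ⟨X, hX⟩ := A.eq_empty_or_nonempty
  · exact ⟨∅, B, isUncrossing_empty hB, by simp⟩
  obtain ⟨K, F, hu, hsum⟩ := ih _ (Finset.erase_ssubset hX) (hA.mono (Finset.erase_subset X A))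
    (isSubpartition_merge hB (hA.1 X hX))
  refine ⟨K ∪ trace X B, F, hu.of_erase_merge hA hX hB, ?_⟩
  rw [hu.isSubpartition_inters.sum_union (hu.forall_disjoint_trace hA hX),
    ← Finset.add_sum_erase A h hX]
  linarith [hh.add_sum_le_sum_trace_add_sum_merge hB (hA.1 X hX)]

theorem IsUncrossing.subset_of_mem_of_mem (hu : IsUncrossing A B K F) {O U : Finset V} {a : V}
    (hO : O ∈ A ∪ B) (hU : U ∈ F) (haO : a ∈ O) (haU : a ∈ U) : O ⊆ U := by
  obtain ⟨U', hU', hOU'⟩ := hu.exists_superset O hO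
  rwa [← hu.isSubpartition_unions.eq_of_mem_of_mem hU' hU (hOU' haO) haU]

theorem IsUncrossing.not_edgeEnters (hu : IsUncrossing A B K F) {O U : Finset V} {e : V × V}
    (hO : O ∈ A ∪ B) (h₁ : e.1 ∈ O) (h₂ : e.2 ∈ O) (hU : U ∈ F) : ¬edgeEnters e U := by
  rintro (⟨hU₁, hU₂⟩ | ⟨hU₂, hU₁⟩)
  exacts [hU₂ (hu.subset_of_mem_of_mem hO hU h₁ hU₁ h₂),
    hU₁ (hu.subset_of_mem_of_mem hO hU h₂ hU₂ h₁)]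

theorem IsUncrossing.exists_mem_of_mem_inters (hu : IsUncrossing A B K F) {M : Finset V}
    (hM : M ∈ K) {a : V} (ha : a ∈ M) : (∃ X ∈ A, a ∈ X) ∧ ∃ Y ∈ B, a ∈ Y := by
  obtain ⟨X, hX, hMX, hsep⟩ := hu.exists_inter_subset M hM
  obtain ⟨Y, hY, haY, -⟩ := hsep a ha
  exact ⟨⟨X, hX, hMX ha⟩, ⟨Y, hY, haY⟩⟩

theorem IsUncrossing.enters_or_enters_of_enters_unions (hu : IsUncrossing A B K F) {e : V × V}
    (hF : ∃ U ∈ F, edgeEnters e U) :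
    (∃ X ∈ A, edgeEnters e X) ∨ ∃ Y ∈ B, edgeEnters e Y := by
  obtain ⟨U, hU, hUe⟩ := hF
  wlog he : e.1 ∈ U ∧ e.2 ∉ U generalizing e
  · simpa only [edgeEnters_swap] using
      this ((edgeEnters_swap e U).2 hUe) (hUe.resolve_left he)
  obtain ⟨O, hO, haO⟩ := hu.exists_mem U hU e.1 he.1
  have hOe : edgeEnters e O :=
    Or.inl ⟨haO, fun hbO => he.2 (hu.subset_of_mem_of_mem hO hU haO he.1 hbO)⟩
  rcases Finset.mem_union.1 hO with hO | hO
  exacts [Or.inl ⟨O, hO, hOe⟩, Or.inr ⟨O, hO, hOe⟩]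

theorem IsUncrossing.enters_or_enters_of_enters_inters (hu : IsUncrossing A B K F) {e : V × V}
    (hK : ∃ M ∈ K, edgeEnters e M) :
    (∃ X ∈ A, edgeEnters e X) ∨ ∃ Y ∈ B, edgeEnters e Y := by
  obtain ⟨M, hM, hMe⟩ := hK
  wlog he : e.1 ∈ M ∧ e.2 ∉ M generalizing e
  · simpa only [edgeEnters_swap] using
      this ((edgeEnters_swap e M).2 hMe) (hMe.resolve_left he)
  obtain ⟨X, hX, hMX, hsep⟩ := hu.exists_inter_subset M hM
  obtain ⟨Y, hY, haY, hXY⟩ := hsep e.1 he.1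
  by_cases hbX : e.2 ∈ X
  · exact Or.inr ⟨Y, hY, Or.inl ⟨haY, fun hbY => he.2 (hXY (Finset.mem_inter.2 ⟨hbX, hbY⟩))⟩⟩
  · exact Or.inl ⟨X, hX, Or.inl ⟨hMX he.1, hbX⟩⟩

theorem IsUncrossing.enters_and_enters (hu : IsUncrossing A B K F) {e : V × V}
    (hK : ∃ M ∈ K, edgeEnters e M) (hF : ∃ U ∈ F, edgeEnters e U) :
    (∃ X ∈ A, edgeEnters e X) ∧ ∃ Y ∈ B, edgeEnters e Y := by
  obtain ⟨M, hM, hMe⟩ := hK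
  wlog he : e.1 ∈ M ∧ e.2 ∉ M generalizing e
  · simpa only [edgeEnters_swap] using
      this (by simpa only [edgeEnters_swap] using hF) ((edgeEnters_swap e M).2 hMe)
        (hMe.resolve_left he)
  obtain ⟨U, hU, hUe⟩ := hF
  obtain ⟨X, hX, hMX, hsep⟩ := hu.exists_inter_subset M hM
  obtain ⟨Y, hY, haY, -⟩ := hsep e.1 he.1
  have hbX : e.2 ∉ X := fun hbX =>
    hu.not_edgeEnters (Finset.mem_union_left _ hX) (hMX he.1) hbX hU hUe
  have hbY : e.2 ∉ Y := fun hbY =>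
    hu.not_edgeEnters (Finset.mem_union_right _ hY) haY hbY hU hUe
  exact ⟨⟨X, hX, Or.inl ⟨hMX he.1, hbX⟩⟩, ⟨Y, hY, Or.inl ⟨haY, hbY⟩⟩⟩

theorem IsUncrossing.eMixed_add_le (hu : IsUncrossing A B K F) (E : Multiset (V × V)) :
    eMixed E 0 K + eMixed E 0 F ≤ eMixed E 0 A + eMixed E 0 B := by
  induction E using Multiset.induction_on with
  | empty => simp [eMixed]
  | cons e E ih =>
    simp only [eMixed_cons_zero]
    have := boole_add_boole_le hu.enters_and_enters hu.enters_or_enters_of_enters_inters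
      (hu.enters_or_enters_of_enters_unions (e := e))
    omega

end Uncrossing

section Orientation

variable {h : Finset V → ℤ} {e : V × V} {E : Multiset (V × V)}

theorem IsSubpartition.not_edgeEnters {P : Finset (Finset V)} (hP : IsSubpartition P)
    {X : Finset V} (hX : X ∈ P) (h₁ : e.1 ∈ X) (h₂ : e.2 ∈ X) {Y : Finset V} (hY : Y ∈ P) :
    ¬edgeEnters e Y := by
  rintro (⟨hY₁, hY₂⟩ | ⟨hY₂, hY₁⟩)
  exacts [hY₂ (hP.eq_of_mem_of_mem hX hY h₁ hY₁ ▸ h₂), hY₁ (hP.eq_of_mem_of_mem hX hY h₂ hY₂ ▸ h₁)]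

theorem IsSubpartition.forall_notMem_and_lt_of_lt_sum_sub {P : Finset (Finset V)}
    (hP : IsSubpartition P) (hcond : ∑ X ∈ P, h X ≤ eMixed (e ::ₘ E) 0 P) {a : V × V}
    (hae : a = e ∨ a = e.swap)
    (hlt : (eMixed E 0 P : ℤ) < ∑ X ∈ P, (h X - if arcEnters a X then 1 else 0)) :
    (∀ X ∈ P, a.2 ∉ X) ∧ (eMixed E 0 P : ℤ) < ∑ X ∈ P, h X := by
  rw [Finset.sum_sub_distrib] at hlt
  rw [eMixed_cons_zero] at hcond
  push_cast at hcond
  have hnonneg : (0 : ℤ) ≤ ∑ X ∈ P, if arcEnters a X then 1 else 0 :=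
    Finset.sum_nonneg fun X _ => by positivity
  refine ⟨fun X hX haX => ?_, by linarith⟩
  obtain ⟨Y, hY, hYe⟩ : ∃ Y ∈ P, edgeEnters e Y := by
    by_contra hY
    rw [if_neg hY] at hcond
    linarith
  have ha₁ : a.1 ∈ X := by
    by_contra ha₁
    have hone := Finset.single_le_sum (fun X _ => by positivity) hX
      (f := fun X => if arcEnters a X then (1 : ℤ) else 0)
    rw [if_pos ⟨haX, ha₁⟩] at hone
    split_ifs at hcond <;> linarith
  rcases hae with rfl | rfl
  exacts [hP.not_edgeEnters hX ha₁ haX hY hYe, hP.not_edgeEnters hX haX ha₁ hY hYe]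

variable [DecidableEq V]

theorem IsIntersectingSupermodular.exists_arc_forall_sum_sub_le
    (hh : IsIntersectingSupermodular h)
    (hcond : ∀ P, IsSubpartition P → ∑ X ∈ P, h X ≤ eMixed (e ::ₘ E) 0 P) :
    ∃ a, (a = e ∨ a = e.swap) ∧ ∀ P, IsSubpartition P →
      ∑ X ∈ P, (h X - if arcEnters a X then 1 else 0) ≤ eMixed E 0 P := by
  by_contra! hfail
  obtain ⟨P₁, hP₁, hlt₁⟩ := hfail e (Or.inl rfl)
  obtain ⟨P₂, hP₂, hlt₂⟩ := hfail e.swap (Or.inr rfl)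
  obtain ⟨hv, hsum₁⟩ := hP₁.forall_notMem_and_lt_of_lt_sum_sub (hcond P₁ hP₁) (Or.inl rfl) hlt₁
  obtain ⟨hu, hsum₂⟩ := hP₂.forall_notMem_and_lt_of_lt_sum_sub (hcond P₂ hP₂) (Or.inr rfl) hlt₂
  obtain ⟨K, F, hKF, hsum⟩ := hh.exists_isUncrossing hP₁ hP₂
  have hK : ¬∃ M ∈ K, edgeEnters e M := by
    rintro ⟨M, hM, ⟨h₁, -⟩ | ⟨h₂, -⟩⟩
    · obtain ⟨Y, hY, hY₁⟩ := (hKF.exists_mem_of_mem_inters hM h₁).2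
      exact hu Y hY hY₁
    · obtain ⟨X, hX, hX₂⟩ := (hKF.exists_mem_of_mem_inters hM h₂).1
      exact hv X hX hX₂
  have hcondK := hcond K hKF.isSubpartition_inters
  have hcondF := hcond F hKF.isSubpartition_unions
  rw [eMixed_cons_zero, if_neg hK] at hcondK
  rw [eMixed_cons_zero] at hcondF
  have hcount : ((eMixed E 0 K + eMixed E 0 F : ℕ) : ℤ) ≤ eMixed E 0 P₁ + eMixed E 0 P₂ := by
    exact_mod_cast hKF.eMixed_add_le E
  push_cast at hcondK hcondF hcount
  split_ifs at hcondF <;> linarith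

theorem IsIntersectingSupermodular.exists_orientation (hh : IsIntersectingSupermodular h)
    (hcond : ∀ P, IsSubpartition P → ∑ X ∈ P, h X ≤ eMixed E 0 P) :
    ∃ Eo, IsOrientationOf E Eo ∧ ∀ X : Finset V, X.Nonempty → h X ≤ (inDeg Eo X : ℤ) := by
  induction E using Multiset.induction_on generalizing h with
  | empty =>
    refine ⟨0, Multiset.Rel.zero, fun X hX => ?_⟩
    simpa [inDeg, eMixed] using hcond {X} (isSubpartition_singleton hX)
  | cons e E ih =>
    obtain ⟨a, hae, ha⟩ := hh.exists_arc_forall_sum_sub_le hcond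
    obtain ⟨Eo, hEo, hcov⟩ := ih (hh.sub_arcEnters a) ha
    refine ⟨a ::ₘ Eo, Multiset.Rel.cons hae hEo, fun X hX => ?_⟩
    rw [inDeg_cons]
    push_cast
    linarith [hcov X hX]

end Orientation

theorem frank_orientation_general
    (V : Type) [DecidableEq V]
    (E : Multiset (V × V))
    (h : Finset V → ℤ)
    (hsup : ∀ X Y : Finset V, (X ∩ Y).Nonempty →
      h X + h Y ≤ h (X ∩ Y) + h (X ∪ Y)) :
    (∃ Eo, IsOrientationOf E Eo ∧
        ∀ X : Finset V, X.Nonempty → h X ≤ (inDeg Eo X : ℤ)) ↔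
    ∀ P : Finset (Finset V), IsSubpartition P →
      (∑ X ∈ P, h X) ≤ (eMixed E 0 P : ℤ) := by
  refine ⟨fun ⟨Eo, hEo, hcov⟩ P hP => ?_, IsIntersectingSupermodular.exists_orientation hsup⟩
  calc ∑ X ∈ P, h X ≤ ∑ X ∈ P, (inDeg Eo X : ℤ) := Finset.sum_le_sum fun X hX => hcov X (hP.1 X hX)
    _ ≤ eMixed E 0 P := by exact_mod_cast sum_inDeg_le_eMixed hEo hP

/-- **Frank's orientation theorem.** Let `G = (V, E)` be an undirected graph and
`h` an integer-valued intersecting supermodular set function with `h(V) = 0`.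
There is an orientation of `E` in which `d⁻(X) ≥ h(X)` for every nonempty
`X ⊆ V` iff `e_E(𝒫) ≥ Σ_{X∈𝒫} h(X)` for every subpartition `𝒫` of `V`. -/
theorem frank_orientation
    (V : Type) [Fintype V] [DecidableEq V]
    (E : Multiset (V × V))
    (h : Finset V → ℤ)
    (hsup : ∀ X Y : Finset V, (X ∩ Y).Nonempty →
      h X + h Y ≤ h (X ∩ Y) + h (X ∪ Y))
    (hV : h Finset.univ = 0) :
    (∃ Eo, IsOrientationOf E Eo ∧
        ∀ X : Finset V, X.Nonempty → h X ≤ (inDeg Eo X : ℤ)) ↔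
    ∀ P : Finset (Finset V), IsSubpartition P →
      (∑ X ∈ P, h X) ≤ (eMixed E 0 P : ℤ) :=
  frank_orientation_general V E h hsup

end ArborPaper
end
end

section
/- Let F=(V,E∪A) be a mixed graph, h an integer-valued intersecting supermodular set function on the subsets of V, and C a strongly connected component of F. For every nonempty X ⊆ C define h_2(X) = max{ h(Y) − d_A^-(Y) : Y ⊆ P_F^C, Y∩C = X, e_{E∪A}(Y−C)=0 }. Then h_2 is an intersecting supermodular set function on the subsets of C. -/
/- Common definitions for formalizing packing-of-arborescences theorems.

Conventions:
* A digraph on a finite vertex type `V` is given by a finite multiset of arcs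
  `A : Multiset (V × V)`, an arc `(u, v)` having tail `u` and head `v`.
* An undirected (multi)graph is given by a multiset of edges `E : Multiset (V × V)`,
  an edge being recorded as an (arbitrarily ordered) pair of its endpoints.
* A multiset `S` of vertices (e.g. of roots) is given by a finite index type `S`
  together with a placement map `π : S → V`; the multiplicity of a vertex `v` is
  the size of the fiber over `v`.
* A dypergraph is given by a multiset `𝒜 : Multiset (Finset V × V)` of dyperedges
  `(Z, z)` with tail set `Z` and head `z`; a hypergraph by a multiset
  `ℰ : Multiset (Finset V)` of hyperedges. -/

attribute [local instance] Classical.propDecidable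

noncomputable section

namespace ArborPaper

variable {V : Type*} [Fintype V] [DecidableEq V]

lemma inDeg_submodular (A : Multiset (V × V)) (S T : Finset V) :
    inDeg A (S ∩ T) + inDeg A (S ∪ T) ≤ inDeg A S + inDeg A T := by
  unfold inDeg
  have h1 := Multiset.filter_add_filter (fun a => arcEnters a (S ∩ T))
    (fun a => arcEnters a (S ∪ T)) A
  have h2 := Multiset.filter_add_filter (fun a => arcEnters a S)
    (fun a => arcEnters a T) A
  have c1 := congrArg Multiset.card h1
  have c2 := congrArg Multiset.card h2
  simp only [Multiset.card_add] at c1 c2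
  rw [c1, c2]
  have m1 : Multiset.card (A.filter fun a => arcEnters a (S ∩ T) ∨ arcEnters a (S ∪ T))
      ≤ Multiset.card (A.filter fun a => arcEnters a S ∨ arcEnters a T) := by
    apply Multiset.card_le_card
    apply Multiset.monotone_filter_right
    intro a ha
    simp only [arcEnters, Finset.mem_inter, Finset.mem_union] at ha ⊢
    tauto
  have m2 : Multiset.card (A.filter fun a => arcEnters a (S ∩ T) ∧ arcEnters a (S ∪ T))
      ≤ Multiset.card (A.filter fun a => arcEnters a S ∧ arcEnters a T) := by
    apply Multiset.card_le_card
    apply Multiset.monotone_filter_right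
    intro a ha
    simp only [arcEnters, Finset.mem_inter, Finset.mem_union] at ha ⊢
    tauto
  omega

lemma eMixed_singleton_eq_zero {E A : Multiset (V × V)} {Z : Finset V} :
    eMixed E A {Z} = 0 ↔ (∀ e ∈ E, ¬ edgeEnters e Z) ∧ (∀ a ∈ A, ¬ arcEnters a Z) := by
  simp [eMixed, Nat.add_eq_zero, Multiset.card_eq_zero, Multiset.filter_eq_nil]

lemma eMixed_singleton_inter {E A : Multiset (V × V)} {Z1 Z2 : Finset V}
    (h1 : eMixed E A {Z1} = 0) (h2 : eMixed E A {Z2} = 0) :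
    eMixed E A {Z1 ∩ Z2} = 0 := by
  rw [eMixed_singleton_eq_zero] at h1 h2 ⊢
  constructor
  · intro e he
    have := h1.1 e he; have := h2.1 e he
    simp only [edgeEnters, Finset.mem_inter] at *
    tauto
  · intro a ha
    have := h1.2 a ha; have := h2.2 a ha
    simp only [arcEnters, Finset.mem_inter] at *
    tauto

lemma eMixed_singleton_union {E A : Multiset (V × V)} {Z1 Z2 : Finset V}
    (h1 : eMixed E A {Z1} = 0) (h2 : eMixed E A {Z2} = 0) :
    eMixed E A {Z1 ∪ Z2} = 0 := by
  rw [eMixed_singleton_eq_zero] at h1 h2 ⊢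
  constructor
  · intro e he
    have := h1.1 e he; have := h2.1 e he
    simp only [edgeEnters, Finset.mem_union] at *
    tauto
  · intro a ha
    have := h1.2 a ha; have := h2.2 a ha
    simp only [arcEnters, Finset.mem_union] at *
    tauto

/-- Claim (Gao–Yang): for a mixed graph `F = (V, E ∪ A)`, an intersecting
supermodular `h` and a strongly connected component `C` of `F`, the function
`h₂(X) = max { h(Y) − d⁻_A(Y) : Y ⊆ P_F^C, Y ∩ C = X, e_{E∪A}(Y − C) = 0 }`
(defined for nonempty `X ⊆ C`, the maximum being over a nonempty family) is
intersecting supermodular on the subsets of `C`. -/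
theorem h2_intersecting_supermodular
    (V : Type) [Fintype V] [DecidableEq V]
    (E A : Multiset (V × V)) (hE : ∀ e ∈ E, e.1 ≠ e.2) (hA : ∀ a ∈ A, a.1 ≠ a.2)
    (h : Finset V → ℤ)
    (hsup : ∀ X Y : Finset V, (X ∩ Y).Nonempty →
      h X + h Y ≤ h (X ∩ Y) + h (X ∪ Y))
    (C : Finset V) (hC : IsSCC E A C)
    (h₂ : Finset V → ℤ)
    (hmax : ∀ X : Finset V, X ⊆ C → X.Nonempty →
      (∃ Y : Finset V, Y ⊆ PF E A C ∧ Y ∩ C = X ∧ eMixed E A {Y \ C} = 0 ∧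
          h₂ X = h Y - (inDeg A Y : ℤ)) ∧
      (∀ Y : Finset V, Y ⊆ PF E A C → Y ∩ C = X → eMixed E A {Y \ C} = 0 →
          h Y - (inDeg A Y : ℤ) ≤ h₂ X)) :
    ∀ X Y : Finset V, X ⊆ C → Y ⊆ C → (X ∩ Y).Nonempty →
      h₂ X + h₂ Y ≤ h₂ (X ∩ Y) + h₂ (X ∪ Y) := by
  intro X Y hX hY hXY
  have hXne : X.Nonempty := hXY.mono Finset.inter_subset_left
  have hYne : Y.Nonempty := hXY.mono Finset.inter_subset_right
  obtain ⟨⟨Y1, hY1P, hY1C, hY1e, hY1v⟩, _⟩ := hmax X hX hXne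
  obtain ⟨⟨Y2, hY2P, hY2C, hY2e, hY2v⟩, _⟩ := hmax Y hY hYne
  obtain ⟨_, hub1⟩ := hmax (X ∩ Y) (Finset.inter_subset_left.trans hX) hXY
  obtain ⟨_, hub2⟩ := hmax (X ∪ Y) (Finset.union_subset hX hY)
    (hXne.mono Finset.subset_union_left)
  have hsd1 : (Y1 ∩ Y2) \ C = (Y1 \ C) ∩ (Y2 \ C) := by
    ext v; simp only [Finset.mem_sdiff, Finset.mem_inter]; tauto
  have hsd2 : (Y1 ∪ Y2) \ C = (Y1 \ C) ∪ (Y2 \ C) := by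
    ext v; simp only [Finset.mem_sdiff, Finset.mem_union]; tauto
  have hic : (Y1 ∩ Y2) ∩ C = X ∩ Y := by
    rw [← hY1C, ← hY2C]; ext v
    simp only [Finset.mem_inter]; tauto
  have huc : (Y1 ∪ Y2) ∩ C = X ∪ Y := by
    rw [← hY1C, ← hY2C]; ext v
    simp only [Finset.mem_inter, Finset.mem_union]; tauto
  have hint : h (Y1 ∩ Y2) - (inDeg A (Y1 ∩ Y2) : ℤ) ≤ h₂ (X ∩ Y) := by
    apply hub1
    · exact (Finset.inter_subset_left).trans hY1P
    · exact hic
    · rw [hsd1]; exact eMixed_singleton_inter hY1e hY2e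
  have huni : h (Y1 ∪ Y2) - (inDeg A (Y1 ∪ Y2) : ℤ) ≤ h₂ (X ∪ Y) := by
    apply hub2
    · exact Finset.union_subset hY1P hY2P
    · exact huc
    · rw [hsd2]; exact eMixed_singleton_union hY1e hY2e
  have hY12ne : (Y1 ∩ Y2).Nonempty := by
    refine hXY.mono ?_
    rw [← hY1C, ← hY2C]
    intro v hv
    simp only [Finset.mem_inter] at *
    tauto
  have hsupm := hsup Y1 Y2 hY12ne
  have hdeg := inDeg_submodular A Y1 Y2
  have hdeg' : (inDeg A (Y1 ∩ Y2) : ℤ) + (inDeg A (Y1 ∪ Y2) : ℤ)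
      ≤ (inDeg A Y1 : ℤ) + (inDeg A Y2 : ℤ) := by exact_mod_cast hdeg
  rw [hY1v, hY2v]
  linarith

end ArborPaper
end
end

section
/- Let ℱ=(V,ℰ∪𝒜) be a mixed hypergraph, f,g : V → ℤ≥0 functions with min{k,g(v)} ≥ f(v) for every v ∈ V, and k,ℓ,ℓ' positive integers; write g_k(v) = min{k, g(v)} and let M_ℱ^k be the extended k-hypergraphic matroid of ℱ on ground set 𝒜∪𝒜_ℰ with rank function r. Then the following are equivalent: (i) for every 𝒵 ⊆ 𝒜∪𝒜_ℰ, both Σ_{v∈V} max{0, k − g_k(v) − d_𝒵^-(v)} ≤ r((𝒜∪𝒜_ℰ)−𝒵) and k|V| − ℓ' − Σ_{v∈V} min{ d_𝒵^-(v), k − f(v) } ≤ r((𝒜∪𝒜_ℰ)−𝒵); (ii) e_{ℰ∪𝒜}(𝒫) ≥ k|𝒫| − min{ ℓ' − f(V−∪𝒫), g_k(∪𝒫) } for every subpartition 𝒫 of V. -/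
/- Common definitions for formalizing packing-of-arborescences theorems.

Conventions:
* A digraph on a finite vertex type `V` is given by a finite multiset of arcs
  `A : Multiset (V × V)`, an arc `(u, v)` having tail `u` and head `v`.
* An undirected (multi)graph is given by a multiset of edges `E : Multiset (V × V)`,
  an edge being recorded as an (arbitrarily ordered) pair of its endpoints.
* A multiset `S` of vertices (e.g. of roots) is given by a finite index type `S`
  together with a placement map `π : S → V`; the multiplicity of a vertex `v` is
  the size of the fiber over `v`.
* A dypergraph is given by a multiset `𝒜 : Multiset (Finset V × V)` of dyperedges
  `(Z, z)` with tail set `Z` and head `z`; a hypergraph by a multiset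
  `ℰ : Multiset (Finset V)` of hyperedges. -/

attribute [local instance] Classical.propDecidable

noncomputable section

namespace ArborPaper

variable {V : Type*} [Fintype V] [DecidableEq V]

/- The extended `k`-hypergraphic matroid of a mixed hypergraph.

The hyperedges are indexed by a finite type `E` (with vertex sets `ε e`, of size
at least two), the dyperedges by a finite type `D` (with tail sets `tl d` and
heads `hd d`).  The ground set of the extended `k`-hypergraphic matroid
`M_ℱ^k` consists of the dyperedges of `𝒜` (the summand `D`) together with, for
each hyperedge `e ∈ ℰ`, the dyperedges `(e − x, x)`, `x ∈ ε e`, of `𝒜_e`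
(the pairs `(e, x)` of the summand `E × V` with `x ∈ ε e`). -/

variable {E D : Type*} [Fintype E] [Fintype D] [DecidableEq E] [DecidableEq D]

/-- The ground set `𝒜 ∪ 𝒜_ℰ` of the extended `k`-hypergraphic matroid. -/
def extGround (ε : E → Finset V) : Finset (D ⊕ E × V) :=
  Finset.univ.filter fun x => Sum.elim (fun _ => True) (fun p => p.2 ∈ ε p.1) x

/-- The head of a ground element, viewed as a dyperedge. -/
def extHead (hd : D → V) : D ⊕ E × V → V := Sum.elim hd fun p => p.2

/-- The underlying hyperedge of a ground element. -/
def extUnder (ε : E → Finset V) (tl : D → Finset V) (hd : D → V) :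
    D ⊕ E × V → Finset V :=
  Sum.elim (fun d => insert (hd d) (tl d)) fun p => ε p.1

/-- Independence in the extended `k`-hypergraphic matroid `M_ℱ^k` : a set of
ground elements containing at most one parallel copy `(e − x, x)` of each
hyperedge `e ∈ ℰ`, whose multiset of underlying hyperedges can be coloured with
`k` colours so that each colour class `𝒵'` (and each nonempty subset of it)
spans more vertices than its size, i.e. is independent in the hypergraphic
matroid of the underlying hypergraph. -/
def ExtIndep (k : ℕ) (ε : E → Finset V) (tl : D → Finset V) (hd : D → V)
    (Z : Finset (D ⊕ E × V)) : Prop :=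
  Z ⊆ extGround ε ∧
  (∀ (e : E) (x x' : V), Sum.inr (e, x) ∈ Z → Sum.inr (e, x') ∈ Z → x = x') ∧
  ∃ c : D ⊕ E × V → Fin k,
    ∀ Z' ⊆ Z, Z'.Nonempty → (∃ i : Fin k, ∀ z ∈ Z', c z = i) →
      Z'.card < (Z'.biUnion (extUnder ε tl hd)).card

/-- The rank function of the extended `k`-hypergraphic matroid `M_ℱ^k`. -/
def extRank (k : ℕ) (ε : E → Finset V) (tl : D → Finset V) (hd : D → V)
    (Z : Finset (D ⊕ E × V)) : ℕ :=
  Z.powerset.sup fun I => if ExtIndep k ε tl hd I then I.card else 0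

/-- `d⁻_𝒵(v)` : the number of elements of `𝒵 ⊆ 𝒜 ∪ 𝒜_ℰ` with head `v`. -/
def extHeadCount (hd : D → V) (Z : Finset (D ⊕ E × V)) (v : V) : ℕ :=
  (Z.filter fun x => extHead hd x = v).card

end ArborPaper

/-!
An independent set of `M_ℱ^k` has at most `k (|X| - 1)` elements whose underlying hyperedge lies
inside a set `X`, since each colour class is a hyperforest, and, holding at most one copy of each
hyperedge, at most `e_{ℰ∪𝒜}(𝒫)` elements entering members of `𝒫`. Deleting every other element
of `𝒜 ∪ 𝒜_ℰ`, so that no deleted element has its head in `∪𝒫`, turns (i) into (ii).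

Conversely, the matroid union theorem for `k` copies of the hypergraphic matroid, derived from
matroid intersection, and the bound `r(T) ≥ |V| - |𝒫| + (number of hyperedges of T inside no part)`
for the partition `𝒫` of `V` into the maximal tight sets of a basis of `T`, reduce each inequality
of (i) to an inequality for every partition `𝒫`. That one follows from (ii) applied to the parts of
`𝒫` on which `d_𝒵 + φ ≤ k`, where `φ` is `g_k` or `f`.
-/

namespace ArborPaper

open Finset

section FinsetMatroid

variable {α : Type*}

structure IsMatroidIndep [DecidableEq α] (Indep : Finset α → Prop) : Prop where
  empty : Indep ∅
  subset : ∀ ⦃I J : Finset α⦄, Indep J → I ⊆ J → Indep I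
  augment : ∀ ⦃I J : Finset α⦄, Indep I → Indep J → #I < #J →
    ∃ e ∈ J, e ∉ I ∧ Indep (insert e I)

def rankOf (Indep : Finset α → Prop) (A : Finset α) : ℕ :=
  {I ∈ A.powerset | Indep I}.sup card

variable {Indep : Finset α → Prop} {A B I J : Finset α} {s : α}

theorem card_le_rankOf (hI : Indep I) (hIA : I ⊆ A) : #I ≤ rankOf Indep A :=
  le_sup (mem_filter.2 ⟨mem_powerset.2 hIA, hI⟩)

theorem rankOf_le_iff {n : ℕ} : rankOf Indep A ≤ n ↔ ∀ I ⊆ A, Indep I → #I ≤ n := by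
  simp [rankOf, Finset.sup_le_iff]

theorem rankOf_empty : rankOf Indep ∅ = 0 :=
  Nat.eq_zero_of_le_zero (rankOf_le_iff.2 fun I hI _ => by simp [subset_empty.1 hI])

theorem rankOf_mono (h : A ⊆ B) : rankOf Indep A ≤ rankOf Indep B :=
  rankOf_le_iff.2 fun _ hI hi => card_le_rankOf hi (hI.trans h)

variable [DecidableEq α]

theorem rankOf_insert_of_not_indep_singleton (hM : ∀ ⦃I J⦄, Indep J → I ⊆ J → Indep I)
    (hs : ¬ Indep {s}) : rankOf Indep (insert s A) = rankOf Indep A := by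
  refine le_antisymm (rankOf_le_iff.2 fun I hI hi => card_le_rankOf hi ?_)
    (rankOf_mono (subset_insert s A))
  intro x hx
  have hxs : x ≠ s := by
    rintro rfl
    exact hs (hM hi (singleton_subset_iff.2 hx))
  exact (mem_insert.1 (hI hx)).resolve_left hxs

namespace IsMatroidIndep

variable (M : IsMatroidIndep Indep)
include M

theorem exists_superset_indep_card_eq_rankOf (hJ : Indep J) (hJA : J ⊆ A) :
    ∃ B, J ⊆ B ∧ B ⊆ A ∧ Indep B ∧ #B = rankOf Indep A := by
  obtain ⟨B, hB, hBmax⟩ := exists_max_image {B ∈ A.powerset | J ⊆ B ∧ Indep B} card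
    ⟨J, by simp [hJA, hJ]⟩
  simp only [mem_filter, mem_powerset] at hB hBmax
  obtain ⟨hBA, hJB, hBi⟩ := hB
  refine ⟨B, hJB, hBA, hBi, le_antisymm (card_le_rankOf hBi hBA) ?_⟩
  by_contra! hlt
  obtain ⟨C, hC, hCmax⟩ := exists_max_image {C ∈ A.powerset | Indep C} card ⟨∅, by simp [M.empty]⟩
  simp only [mem_filter, mem_powerset] at hC
  have hBC : #B < #C := hlt.trans_le (rankOf_le_iff.2 fun I hI hi =>
    hCmax I (mem_filter.2 ⟨mem_powerset.2 hI, hi⟩))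
  obtain ⟨e, heC, heB, hi⟩ := M.augment hBi hC.2 hBC
  have := hBmax (insert e B) ⟨insert_subset (hC.1 heC) hBA, hJB.trans (subset_insert e B), hi⟩
  rw [card_insert_of_notMem heB] at this
  omega

theorem exists_indep_card_eq_rankOf (A : Finset α) :
    ∃ B ⊆ A, Indep B ∧ #B = rankOf Indep A := by
  obtain ⟨B, -, hBA, hB⟩ := M.exists_superset_indep_card_eq_rankOf M.empty (empty_subset A)
  exact ⟨B, hBA, hB⟩

theorem rankOf_union_add_rankOf_inter_le (A B : Finset α) :
    rankOf Indep (A ∪ B) + rankOf Indep (A ∩ B) ≤ rankOf Indep A + rankOf Indep B := by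
  obtain ⟨J, hJ, hJi, hJr⟩ := M.exists_indep_card_eq_rankOf (A ∩ B)
  obtain ⟨C, hJC, hCAB, hCi, hCr⟩ :=
    M.exists_superset_indep_card_eq_rankOf hJi (hJ.trans inter_subset_union)
  have hA := card_le_rankOf (M.subset hCi inter_subset_left) (inter_subset_right : C ∩ A ⊆ A)
  have hB := card_le_rankOf (M.subset hCi inter_subset_left) (inter_subset_right : C ∩ B ⊆ B)
  have hsplit : #(C ∩ A) + #(C ∩ B) = #C + #(C ∩ (A ∩ B)) := by
    rw [← card_union_add_card_inter, ← inter_union_distrib_left, inter_eq_left.2 hCAB,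
      ← inter_inter_distrib_left]
  have := card_le_card (subset_inter hJC hJ)
  omega

end IsMatroidIndep

def contractIndep (Indep : Finset α → Prop) (s : α) (J : Finset α) : Prop :=
  s ∉ J ∧ Indep (insert s J)

namespace IsMatroidIndep

variable (M : IsMatroidIndep Indep)
include M

theorem contract (hs : Indep {s}) : IsMatroidIndep (contractIndep Indep s) where
  empty := ⟨notMem_empty s, by simpa using hs⟩
  subset _ _ hJ hIJ := ⟨fun h => hJ.1 (hIJ h), M.subset hJ.2 (insert_subset_insert s hIJ)⟩
  augment I J hI hJ hIJ := by
    obtain ⟨e, heJ, heI, hi⟩ := M.augment hI.2 hJ.2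
      (by rw [card_insert_of_notMem hI.1, card_insert_of_notMem hJ.1]; omega)
    have hes : e ≠ s := by rintro rfl; exact heI (mem_insert_self e I)
    refine ⟨e, (mem_insert.1 heJ).resolve_left hes, fun h => heI (mem_insert_of_mem h), ?_, ?_⟩
    · simpa [hes.symm] using hI.1
    · rwa [insert_comm]

theorem rankOf_contract_add_one (hs : Indep {s}) :
    rankOf (contractIndep Indep s) A + 1 = rankOf Indep (insert s A) := by
  apply le_antisymm
  · obtain ⟨B, hBA, ⟨hsB, hBi⟩, hB⟩ := (M.contract hs).exists_indep_card_eq_rankOf A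
    have := card_le_rankOf hBi (insert_subset_insert s hBA)
    rw [card_insert_of_notMem hsB] at this
    omega
  · obtain ⟨B, hsB, hBA, hBi, hB⟩ :=
      M.exists_superset_indep_card_eq_rankOf hs (singleton_subset_iff.2 (mem_insert_self s A))
    have hs : s ∈ B := singleton_subset_iff.1 hsB
    have hcon : contractIndep Indep s (B.erase s) := ⟨notMem_erase s B, by rwa [insert_erase hs]⟩
    have := card_le_rankOf hcon ((erase_subset_erase s hBA).trans (erase_insert_subset s A))
    rw [card_erase_of_mem hs] at this
    omega

end IsMatroidIndep

theorem exists_common_indep_of_forall_le_rankOf_add_rankOf {I₁ I₂ : Finset α → Prop}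
    (M₁ : IsMatroidIndep I₁) (M₂ : IsMatroidIndep I₂) (S : Finset α) (t : ℕ)
    (h : ∀ A ⊆ S, t ≤ rankOf I₁ A + rankOf I₂ (S \ A)) :
    ∃ J ⊆ S, I₁ J ∧ I₂ J ∧ t ≤ #J := by
  induction S using Finset.induction_on generalizing I₁ I₂ t with
  | empty =>
    have := h ∅ subset_rfl
    rw [rankOf_empty, empty_sdiff, rankOf_empty] at this
    exact ⟨∅, subset_rfl, M₁.empty, M₂.empty, this⟩
  | insert s S hsS ih =>
    by_cases hdel : ∀ A ⊆ S, t ≤ rankOf I₁ A + rankOf I₂ (S \ A)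
    · obtain ⟨J, hJS, hJ⟩ := ih M₁ M₂ t hdel
      exact ⟨J, hJS.trans (subset_insert s S), hJ⟩
    push Not at hdel
    obtain ⟨A₁, hA₁S, hA₁⟩ := hdel
    have hsA₁ : s ∉ A₁ := fun h => hsS (hA₁S h)
    have hs₁ : I₁ {s} := by
      by_contra hs
      have := h (insert s A₁) (insert_subset_insert s hA₁S)
      rw [rankOf_insert_of_not_indep_singleton M₁.subset hs, insert_sdiff_insert,
        sdiff_insert_of_notMem hsS] at this
      omega
    have hs₂ : I₂ {s} := by
      by_contra hs
      have := h A₁ (hA₁S.trans (subset_insert s S))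
      rw [insert_sdiff_of_notMem _ hsA₁, rankOf_insert_of_not_indep_singleton M₂.subset hs] at this
      omega
    have hcon : ∀ A₂ ⊆ S, t - 1 ≤ rankOf (contractIndep I₁ s) A₂ +
        rankOf (contractIndep I₂ s) (S \ A₂) := by
      -- Uncross `A₁` with a set `A₂` violating the condition in the contraction.
      intro A₂ hA₂S
      by_contra! hA₂
      have e₁ := M₁.rankOf_contract_add_one hs₁ (A := A₂)
      have e₂ := M₂.rankOf_contract_add_one hs₂ (A := S \ A₂)
      have sub₁ := M₁.rankOf_union_add_rankOf_inter_le A₁ (insert s A₂)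
      have sub₂ := M₂.rankOf_union_add_rankOf_inter_le (S \ A₁) (insert s (S \ A₂))
      have h₁ := h (A₁ ∩ A₂) (inter_subset_left.trans (hA₁S.trans (subset_insert s S)))
      have h₂ := h (A₁ ∪ insert s A₂) (union_subset (hA₁S.trans (subset_insert s S))
        (insert_subset_insert s hA₂S))
      have k₁ : A₁ ∩ insert s A₂ = A₁ ∩ A₂ := by grind
      have k₂ : S \ A₁ ∪ insert s (S \ A₂) = insert s S \ (A₁ ∩ A₂) := by grind
      have k₃ : S \ A₁ ∩ insert s (S \ A₂) = insert s S \ (A₁ ∪ insert s A₂) := by grind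
      rw [k₁] at sub₁
      rw [k₂, k₃] at sub₂
      omega
    obtain ⟨J, hJS, hJ₁, hJ₂, hJ⟩ := ih (M₁.contract hs₁) (M₂.contract hs₂) (t - 1) hcon
    refine ⟨insert s J, insert_subset_insert s hJS, hJ₁.2, hJ₂.2, ?_⟩
    rw [card_insert_of_notMem hJ₁.1]
    omega

end FinsetMatroid

section MatroidUnion

variable {α β : Type*} [DecidableEq β]

theorem card_image_le_rankOf_injOn (f : α → β) (A : Finset α) :
    #(A.image f) ≤ rankOf (fun J : Finset α => Set.InjOn f J) A := by
  obtain ⟨B, hBA, hB, himage⟩ := exists_subset_injOn_image_eq_of_surjOn (A : Set α) (A.image f)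
    (by rw [coe_image]; exact Set.surjOn_image f _)
  rw [← himage, card_image_of_injOn hB]
  exact card_le_rankOf hB (coe_subset.1 hBA)

variable [DecidableEq α]

theorem isMatroidIndep_injOn (f : α → β) :
    IsMatroidIndep fun J : Finset α => Set.InjOn f J where
  empty := by simp
  subset _ _ hJ hIJ := hJ.mono (coe_subset.2 hIJ)
  augment I J hI hJ hIJ := by
    rw [← card_image_of_injOn hI, ← card_image_of_injOn hJ] at hIJ
    obtain ⟨b, hbJ, hbI⟩ := exists_mem_notMem_of_card_lt_card hIJ
    obtain ⟨e, heJ, rfl⟩ := mem_image.1 hbJ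
    have heI : e ∉ I := fun he => hbI (mem_image_of_mem f he)
    refine ⟨e, heJ, heI, ?_⟩
    rw [coe_insert, Set.injOn_insert (mem_coe.not.2 heI)]
    exact ⟨hI, by simpa using hbI⟩

variable {k : ℕ}

def slice (J : Finset (α × Fin k)) (i : Fin k) : Finset α :=
  {p ∈ J | p.2 = i}.image Prod.fst

@[simp]
theorem mem_slice {J : Finset (α × Fin k)} {i : Fin k} {a : α} : a ∈ slice J i ↔ (a, i) ∈ J := by
  simp [slice]

theorem sum_card_slice (J : Finset (α × Fin k)) : ∑ i, #(slice J i) = #J := by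
  rw [card_eq_sum_card_fiberwise (f := Prod.snd) (t := univ) fun _ _ => mem_univ _]
  refine sum_congr rfl fun i _ => card_image_of_injOn fun p hp q hq hpq => ?_
  simp only [coe_filter, Set.mem_ofPred_eq] at hp hq
  exact Prod.ext hpq (hp.2.trans hq.2.symm)

/-- Independence in the direct sum of `k` copies of a matroid on `α`. -/
def sumIndep (Indep : Finset α → Prop) (k : ℕ) (J : Finset (α × Fin k)) : Prop :=
  ∀ i, Indep (slice J i)

variable {Indep : Finset α → Prop}

theorem isMatroidIndep_sumIndep (M : IsMatroidIndep Indep) :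
    IsMatroidIndep (sumIndep Indep k) where
  empty i := by simpa [slice] using M.empty
  subset I J hJ hIJ i := M.subset (hJ i) fun a => by simpa using @hIJ (a, i)
  augment I J hI hJ hIJ := by
    rw [← sum_card_slice I, ← sum_card_slice J] at hIJ
    obtain ⟨i, -, hi⟩ := exists_lt_of_sum_lt hIJ
    obtain ⟨e, heJ, heI, hins⟩ := M.augment (hI i) (hJ i) hi
    refine ⟨(e, i), mem_slice.1 heJ, mem_slice.not.1 heI, fun j => ?_⟩
    by_cases hji : j = i
    · subst hji
      convert hins using 1
      ext a
      simp
    · convert hI j using 1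
      ext a
      simp [hji]

/-- The matroid union theorem for `k` copies of one matroid, derived from the intersection
theorem for the direct sum of the copies and the partition matroid with blocks `{a} × Fin k`. -/
theorem IsMatroidIndep.exists_colouring_of_forall_le (M : IsMatroidIndep Indep) (hk : 0 < k)
    (S : Finset α) (t : ℕ) (h : ∀ T ⊆ S, t ≤ #(S \ T) + k * rankOf Indep T) :
    ∃ J ⊆ S, t ≤ #J ∧ ∃ col : α → Fin k, ∀ i, Indep {a ∈ J | col a = i} := by
  obtain ⟨J, hJS, hJ₁, hJ₂, hJ⟩ := exists_common_indep_of_forall_le_rankOf_add_rankOf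
    (isMatroidIndep_sumIndep M) (isMatroidIndep_injOn Prod.fst) (S ×ˢ univ) t fun A hA => by
      set T := {a ∈ S | ∀ i, (a, i) ∈ A}
      obtain ⟨B, hBT, hB, hBr⟩ := M.exists_indep_card_eq_rankOf T
      have h₁ : k * rankOf Indep T ≤ rankOf (sumIndep Indep k) A := by
        have hBA : B ×ˢ (univ : Finset (Fin k)) ⊆ A := fun p hp =>
          ((mem_filter.1 (hBT (mem_product.1 hp).1)).2 p.2)
        have hsum : sumIndep Indep k (B ×ˢ univ) := fun i => by
          convert hB using 1
          ext a
          simp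
        simpa [← hBr, mul_comm] using card_le_rankOf hsum hBA
      have h₂ : #(S \ T) ≤ rankOf (fun J : Finset (α × Fin k) =>
          Set.InjOn Prod.fst (J : Set (α × Fin k))) (S ×ˢ univ \ A) := by
        refine (card_le_card fun a ha => ?_).trans (card_image_le_rankOf_injOn Prod.fst _)
        simp only [T, mem_sdiff, mem_filter, not_and, not_forall] at ha
        obtain ⟨i, hi⟩ := ha.2 ha.1
        exact mem_image.2 ⟨(a, i), by simp [ha.1, hi], rfl⟩
      have := h T (filter_subset _ S)
      omega
  classical
  let col : α → Fin k := fun a => if ha : ∃ i, (a, i) ∈ J then ha.choose else ⟨0, hk⟩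
  have hcol : ∀ p ∈ J, (p.1, col p.1) ∈ J := fun p hp => by
    have ha : ∃ i, (p.1, i) ∈ J := ⟨p.2, hp⟩
    simpa [col, ha] using ha.choose_spec
  refine ⟨J.image Prod.fst, fun a ha => ?_, (card_image_of_injOn hJ₂).symm ▸ hJ, col, fun i => ?_⟩
  · obtain ⟨p, hp, rfl⟩ := mem_image.1 ha
    exact (mem_product.1 (hJS hp)).1
  · refine M.subset (hJ₁ i) fun a ha => ?_
    simp only [mem_filter, mem_image] at ha
    obtain ⟨⟨p, hp, rfl⟩, rfl⟩ := ha
    exact mem_slice.2 (hcol p hp)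

end MatroidUnion

section Hyperforest

variable {C V : Type*} {h : C → Finset V} {I J T : Finset C} {X Y : Finset V}

theorem sum_card_sub_one_add_card {P : Finset (Finset V)} (hP : ∀ X ∈ P, X.Nonempty) :
    ∑ X ∈ P, (#X - 1) + #P = ∑ X ∈ P, #X := by
  rw [card_eq_sum_ones, ← sum_add_distrib]
  exact sum_congr rfl fun X hX => Nat.sub_add_cancel (card_pos.2 (hP X hX))

variable [DecidableEq V]

def IsHyperforest (h : C → Finset V) (J : Finset C) : Prop :=
  ∀ J' ⊆ J, J'.Nonempty → #J' < #(J'.biUnion h)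

def IsTight (h : C → Finset V) (J : Finset C) (X : Finset V) : Prop :=
  X.Nonempty ∧ #{c ∈ J | h c ⊆ X} + 1 = #X

theorem isHyperforest_empty : IsHyperforest h ∅ := by
  simp [IsHyperforest]

theorem IsHyperforest.subset (hJ : IsHyperforest h J) (hIJ : I ⊆ J) : IsHyperforest h I :=
  fun J' hJ' => hJ J' (hJ'.trans hIJ)

theorem IsHyperforest.card_filter_subset_le (hJ : IsHyperforest h J) (X : Finset V) :
    #{c ∈ J | h c ⊆ X} ≤ #X - 1 := by
  rcases Finset.eq_empty_or_nonempty {c ∈ J | h c ⊆ X} with hF | hF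
  · simp [hF]
  · have := (hJ _ (filter_subset _ J) hF).trans_le
      (card_le_card (biUnion_subset.2 fun c hc => (mem_filter.1 hc).2))
    omega

theorem IsHyperforest.one_lt_card (hJ : IsHyperforest h J) {c : C} (hc : c ∈ J) :
    1 < #(h c) := by
  simpa using hJ {c} (singleton_subset_iff.2 hc) (singleton_nonempty c)

theorem IsHyperforest.isTight_singleton (hJ : IsHyperforest h J) (v : V) : IsTight h J {v} := by
  refine ⟨singleton_nonempty v, ?_⟩
  rw [card_singleton, add_eq_right, card_eq_zero, filter_eq_empty_iff]
  intro c hc hcv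
  have := card_le_card hcv
  have := hJ.one_lt_card hc
  rw [card_singleton] at *
  omega

theorem IsHyperforest.card_filter_exists_subset_le (hJ : IsHyperforest h J)
    (P : Finset (Finset V)) : #{c ∈ J | ∃ X ∈ P, h c ⊆ X} ≤ ∑ X ∈ P, (#X - 1) := by
  have hcover : {c ∈ J | ∃ X ∈ P, h c ⊆ X} = P.biUnion fun X => {c ∈ J | h c ⊆ X} := by
    ext c
    simp only [mem_filter, mem_biUnion]
    grind
  rw [hcover]
  exact card_biUnion_le.trans (sum_le_sum fun X _ => hJ.card_filter_subset_le X)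

variable [DecidableEq C]

theorem IsHyperforest.comp_of_injOn {C' : Type*} {φ : C' → C} {s : Finset C'}
    (hφ : Set.InjOn φ s) (hs : IsHyperforest h (s.image φ)) : IsHyperforest (h ∘ φ) s :=
  fun J' hJ' hne => by
    simpa [card_image_of_injOn (hφ.mono (coe_subset.2 hJ')), image_biUnion, Function.comp_def] using
      hs _ (image_subset_image hJ') (hne.image φ)

theorem IsHyperforest.isTight_union (hJ : IsHyperforest h J) (hX : IsTight h J X)
    (hY : IsTight h J Y) (hXY : (X ∩ Y).Nonempty) : IsTight h J (X ∪ Y) := by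
  have hsub : {c ∈ J | h c ⊆ X} ∪ {c ∈ J | h c ⊆ Y} ⊆ {c ∈ J | h c ⊆ X ∪ Y} := by
    intro c
    simp only [mem_union, mem_filter]
    rintro (⟨hc, hcX⟩ | ⟨hc, hcY⟩)
    exacts [⟨hc, hcX.trans subset_union_left⟩, ⟨hc, hcY.trans subset_union_right⟩]
  have hinter : {c ∈ J | h c ⊆ X} ∩ {c ∈ J | h c ⊆ Y} = {c ∈ J | h c ⊆ X ∩ Y} := by
    rw [← filter_and]
    simp only [subset_inter_iff]
  have hsuper : #{c ∈ J | h c ⊆ X} + #{c ∈ J | h c ⊆ Y} ≤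
      #{c ∈ J | h c ⊆ X ∪ Y} + #{c ∈ J | h c ⊆ X ∩ Y} := by
    rw [← hinter, ← card_union_add_card_inter]
    exact Nat.add_le_add_right (card_le_card hsub) _
  have hne : (X ∪ Y).Nonempty := hX.1.mono subset_union_left
  have := hJ.card_filter_subset_le (X ∪ Y)
  have := hJ.card_filter_subset_le (X ∩ Y)
  have := card_union_add_card_inter X Y
  have := card_pos.2 hXY
  have := card_pos.2 hne
  exact ⟨hne, by have := hX.2; have := hY.2; omega⟩

theorem IsHyperforest.exists_isTight_of_not_insert {z : C} (hz : (h z).Nonempty)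
    (hJ : IsHyperforest h J) (hzJ : ¬ IsHyperforest h (insert z J)) :
    ∃ X, IsTight h J X ∧ h z ⊆ X := by
  simp only [IsHyperforest, not_forall, not_lt] at hzJ
  obtain ⟨J', hJ', hJ'ne, hcard⟩ := hzJ
  have hzJ' : z ∈ J' := by
    by_contra hz'
    exact (hJ J' (fun c hc => (mem_insert.1 (hJ' hc)).resolve_left (ne_of_mem_of_not_mem hc hz'))
      hJ'ne).not_ge hcard
  have hzX : h z ⊆ J'.biUnion h := subset_biUnion_of_mem h hzJ'
  have hind : J'.erase z ⊆ {c ∈ J | h c ⊆ J'.biUnion h} := fun c hc =>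
    mem_filter.2 ⟨(mem_insert.1 (hJ' (mem_of_mem_erase hc))).resolve_left (ne_of_mem_erase hc),
      subset_biUnion_of_mem h (mem_of_mem_erase hc)⟩
  have h₁ := card_le_card hind
  rw [card_erase_of_mem hzJ'] at h₁
  have h₂ := hJ.card_filter_subset_le (J'.biUnion h)
  have h₃ := card_pos.2 hJ'ne
  have h₄ := card_pos.2 (hz.mono hzX)
  exact ⟨_, ⟨hz.mono hzX, by omega⟩, hzX⟩

variable [Fintype V]

omit [DecidableEq C] in
theorem IsHyperforest.card_add_card_parts_le (hJ : IsHyperforest h J)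
    (P : Finpartition (univ : Finset V)) :
    #J + #P.parts ≤ Fintype.card V + #{c ∈ J | ∀ X ∈ P.parts, ¬ h c ⊆ X} := by
  have := hJ.card_filter_exists_subset_le P.parts
  have := sum_card_sub_one_add_card fun X => P.nonempty_of_mem_parts (a := X)
  have := card_filter_add_card_filter_not (s := J) fun c => ∃ X ∈ P.parts, h c ⊆ X
  rw [P.sum_card_parts, card_univ] at *
  simp only [not_exists, not_and] at *
  omega

theorem IsHyperforest.exists_finpartition_isTight (hJ : IsHyperforest h J) :
    ∃ P : Finpartition (univ : Finset V),
      (∀ X ∈ P.parts, IsTight h J X) ∧ ∀ Y, IsTight h J Y → ∃ X ∈ P.parts, Y ⊆ X := by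
  have hmax : ∀ {X Y}, Maximal (IsTight h J) X → Maximal (IsTight h J) Y →
      (X ∩ Y).Nonempty → X = Y := fun hX hY hXY =>
    (hX.eq_of_le (hJ.isTight_union hX.1 hY.1 hXY) subset_union_left).trans
      (hY.eq_of_le (hJ.isTight_union hX.1 hY.1 hXY) subset_union_right).symm
  refine ⟨Finpartition.ofExistsUnique {X | Maximal (IsTight h J) X} (fun _ _ => subset_univ _)
    (fun v _ => ?_) (by simpa using fun h => h.1.1.ne_empty rfl),
    by simp +contextual [Maximal.prop], fun Y hY => ?_⟩
  · obtain ⟨X, hvX, hX⟩ := Finite.exists_le_maximal (hJ.isTight_singleton v)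
    refine ⟨X, ⟨by simpa using hX, singleton_subset_iff.1 hvX⟩, fun Y ⟨hY, hvY⟩ => ?_⟩
    exact hmax (by simpa using hY) hX ⟨v, mem_inter.2 ⟨hvY, singleton_subset_iff.1 hvX⟩⟩
  · obtain ⟨X, hYX, hX⟩ := Finite.exists_le_maximal hY
    exact ⟨X, by simpa using hX, hYX⟩

theorem IsHyperforest.exists_finpartition_card_le (hne : ∀ c, (h c).Nonempty)
    (hJ : IsHyperforest h J) (hT : ∀ z ∈ T, z ∉ J → ¬ IsHyperforest h (insert z J)) :
    ∃ P : Finpartition (univ : Finset V),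
      Fintype.card V + #{c ∈ T | ∀ X ∈ P.parts, ¬ h c ⊆ X} ≤ #J + #P.parts := by
  obtain ⟨P, hPtight, hPmax⟩ := hJ.exists_finpartition_isTight
  refine ⟨P, ?_⟩
  have hcross : {c ∈ T | ∀ X ∈ P.parts, ¬ h c ⊆ X} ⊆ {c ∈ J | ∀ X ∈ P.parts, ¬ h c ⊆ X} := by
    intro c hc
    rw [mem_filter] at hc ⊢
    refine ⟨by_contra fun hcJ => ?_, hc.2⟩
    obtain ⟨Y, hY, hcY⟩ := hJ.exists_isTight_of_not_insert (hne c) (hT c hc.1 hcJ)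
    obtain ⟨X, hX, hYX⟩ := hPmax Y hY
    exact hc.2 X hX (hcY.trans hYX)
  -- Inside a tight part `X` the hyperforest has exactly `#X - 1` hyperedges, and no hyperedge of
  -- `J` lies inside two disjoint parts.
  have hinside : ∑ X ∈ P.parts, (#{c ∈ J | h c ⊆ X} + 1) ≤ #{c ∈ J | ∃ X ∈ P.parts, h c ⊆ X}
      + #P.parts := by
    rw [sum_add_distrib, sum_const, smul_eq_mul, mul_one, ← card_biUnion]
    · refine Nat.add_le_add_right (card_le_card fun c => ?_) _
      simp only [mem_biUnion, mem_filter]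
      grind
    · intro X hX Y hY hXY
      refine disjoint_filter.2 fun c hc hcX hcY => ?_
      have := (hJ.one_lt_card hc).trans_le (card_le_card (subset_inter hcX hcY))
      have h0 : X ∩ Y = ∅ := disjoint_iff_inter_eq_empty.1 (P.disjoint hX hY hXY)
      simp [h0] at this
  have htight : ∑ X ∈ P.parts, (#{c ∈ J | h c ⊆ X} + 1) = Fintype.card V := by
    rw [← card_univ, ← P.sum_card_parts]
    exact sum_congr rfl fun X hX => (hPtight X hX).2
  have := card_le_card hcross
  have := card_filter_add_card_filter_not (s := J) fun c => ∃ X ∈ P.parts, h c ⊆ X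
  simp only [not_exists, not_and] at *
  omega

theorem isMatroidIndep_isHyperforest (hne : ∀ c, (h c).Nonempty) :
    IsMatroidIndep (IsHyperforest h) where
  empty := isHyperforest_empty
  subset _ _ hJ hIJ := hJ.subset hIJ
  augment I J hI hJ hIJ := by
    by_contra! hno
    obtain ⟨P, hP⟩ := hI.exists_finpartition_card_le hne hno
    have := hJ.card_add_card_parts_le P
    omega

theorem exists_finpartition_le_rankOf (hne : ∀ c, (h c).Nonempty) (T : Finset C) :
    ∃ P : Finpartition (univ : Finset V),
      Fintype.card V + #{c ∈ T | ∀ X ∈ P.parts, ¬ h c ⊆ X} ≤ rankOf (IsHyperforest h) T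
        + #P.parts := by
  obtain ⟨J, hJT, hJ, hJr⟩ := (isMatroidIndep_isHyperforest hne).exists_indep_card_eq_rankOf T
  rw [← hJr]
  refine hJ.exists_finpartition_card_le hne fun z hz hzJ hins => ?_
  have := card_le_rankOf hins (insert_subset hz hJT)
  rw [card_insert_of_notMem hzJ] at this
  omega

theorem exists_isHyperforest_colouring (hne : ∀ c, (h c).Nonempty) {k : ℕ} (hk : 0 < k)
    (S : Finset C) (t : ℕ) (hS : ∀ P : Finpartition (univ : Finset V),
      t + k * #P.parts ≤ k * Fintype.card V + #{c ∈ S | ∀ X ∈ P.parts, ¬ h c ⊆ X}) :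
    ∃ J ⊆ S, t ≤ #J ∧ ∃ col : C → Fin k, ∀ i, IsHyperforest h {c ∈ J | col c = i} := by
  refine (isMatroidIndep_isHyperforest hne).exists_colouring_of_forall_le hk S t fun T hTS => ?_
  obtain ⟨P, hP⟩ := exists_finpartition_le_rankOf hne T
  have hcross : #{c ∈ S | ∀ X ∈ P.parts, ¬ h c ⊆ X} ≤
      #{c ∈ T | ∀ X ∈ P.parts, ¬ h c ⊆ X} + #(S \ T) :=
    (card_le_card fun c hc => by by_cases hcT : c ∈ T <;> simp_all).trans (card_union_le _ _)
  have := hS P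
  have := Nat.mul_le_mul_left k hP
  have := Nat.le_mul_of_pos_left #{c ∈ T | ∀ X ∈ P.parts, ¬ h c ⊆ X} hk
  rw [mul_add, mul_add] at *
  omega

end Hyperforest

section Subpartition

variable {V : Type*} {P Q : Finset (Finset V)}

theorem IsSubpartition.subset (hP : IsSubpartition P) (hQP : Q ⊆ P) : IsSubpartition Q :=
  ⟨fun X hX => hP.1 X (hQP hX), fun X hX Y hY => hP.2 X (hQP hX) Y (hQP hY)⟩

variable [DecidableEq V]

theorem IsSubpartition.card_biUnion (hP : IsSubpartition P) : #(P.biUnion id) = ∑ X ∈ P, #X :=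
  Finset.card_biUnion fun X hX Y hY => hP.2 X hX Y hY

theorem IsSubpartition.not_subset_of_hypEnters (hP : IsSubpartition P) {X Y e : Finset V}
    (hX : X ∈ P) (hY : Y ∈ P) (he : hypEnters e X) : ¬ e ⊆ Y := by
  intro heY
  obtain ⟨⟨v, hv⟩, w, hw⟩ := he
  have hXY : X = Y := by
    by_contra hne
    exact disjoint_left.1 (hP.2 X hX Y hY hne) (mem_inter.1 hv).2 (heY (mem_inter.1 hv).1)
  exact (mem_sdiff.1 hw).2 (hXY ▸ heY (mem_sdiff.1 hw).1)

theorem IsSubpartition.exists_card_eq (hP : IsSubpartition P) {p : V → Prop}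
    (h : ∀ X ∈ P, ∃ v ∈ X, p v) : ∃ R : Finset V, #R = #P ∧ ∀ v ∈ R, p v := by
  choose r hr using fun X : ↥P => h X.1 X.2
  refine ⟨univ.image r, (card_image_of_injective _ fun X Y (hXY : r X = r Y) => ?_).trans
    (by rw [card_univ, Fintype.card_coe]), fun v hv => ?_⟩
  · by_contra hne
    exact disjoint_left.1 (hP.2 _ X.2 _ Y.2 (Subtype.coe_ne_coe.2 hne)) (hr X).1 (hXY ▸ (hr Y).1)
  · obtain ⟨X, -, rfl⟩ := mem_image.1 hv
    exact (hr X).2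

theorem isSubpartition_parts [Fintype V] (P : Finpartition (univ : Finset V)) :
    IsSubpartition P.parts :=
  ⟨fun _ => P.nonempty_of_mem_parts, fun _ hX _ hY => P.disjoint hX hY⟩

end Subpartition

section Sums

variable {ι : Type*} [Fintype ι] {W : Finset ι} {a : ι → ℤ} {d : ι → ℕ}

theorem sum_le_sum_max_sub (ha : ∀ i, 0 ≤ a i) (hd : ∀ i ∈ W, d i = 0) :
    ∑ i ∈ W, a i ≤ ∑ i, max 0 (a i - d i) :=
  (sum_congr rfl fun i hi => by simp [hd i hi, ha i]).trans_le
    (sum_le_sum_of_subset_of_nonneg (subset_univ W) fun i _ _ => le_max_left _ _)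

theorem sum_min_le_sum_sdiff [DecidableEq ι] (ha : ∀ i, 0 ≤ a i) (hd : ∀ i ∈ W, d i = 0) :
    ∑ i, min (d i : ℤ) (a i) ≤ ∑ i ∈ univ \ W, a i := by
  rw [← sum_sdiff (subset_univ W), sum_eq_zero (s := W) fun i hi => by simp [hd i hi, ha i],
    add_zero]
  exact sum_le_sum fun i _ => min_le_right _ _

end Sums

section MixedHypergraph

variable {V E D : Type*}

/-- The dyperedge of `𝒜`, or the hyperedge of `ℰ`, that a ground element comes from. -/
def classOf : D ⊕ E × V → D ⊕ E := Sum.map id Prod.fst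

theorem injOn_classOf_iff {I : Finset (D ⊕ E × V)} :
    Set.InjOn classOf (I : Set (D ⊕ E × V)) ↔
      ∀ (e : E) (x x' : V), Sum.inr (e, x) ∈ I → Sum.inr (e, x') ∈ I → x = x' := by
  constructor
  · intro h e x x' hx hx'
    simpa using h hx hx' rfl
  · rintro h (d | ⟨e, x⟩) ha (d' | ⟨e', x'⟩) hb hab <;> simp only [classOf, Sum.map_inl,
      Sum.map_inr, id, Sum.inl.injEq, Sum.inr.injEq, reduceCtorEq] at hab
    · rw [hab]
    · subst hab
      rw [h e x x' ha hb]

variable [DecidableEq V] (ε : E → Finset V) (tl : D → Finset V) (hd : D → V)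

def classUnder : D ⊕ E → Finset V := Sum.elim (fun d => insert (hd d) (tl d)) ε

def extTail : D ⊕ E × V → Finset V := Sum.elim tl fun p => (ε p.1).erase p.2

def ClassEnters (c : D ⊕ E) (X : Finset V) : Prop :=
  Sum.elim (fun d => dypEnters (tl d, hd d) X) (fun e => hypEnters (ε e) X) c

variable {ε tl hd}

theorem extUnder_eq_classUnder (x : D ⊕ E × V) :
    extUnder ε tl hd x = classUnder ε tl hd (classOf x) := by
  cases x <;> rfl

theorem ClassEnters.hypEnters {c : D ⊕ E} {X : Finset V} (h : ClassEnters ε tl hd c X) :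
    hypEnters (classUnder ε tl hd c) X := by
  rcases c with d | e
  · obtain ⟨hdX, w, hw⟩ := h
    exact ⟨⟨hd d, mem_inter.2 ⟨mem_insert_self _ _, hdX⟩⟩,
      w, mem_sdiff.2 ⟨mem_insert_of_mem (mem_sdiff.1 hw).1, (mem_sdiff.1 hw).2⟩⟩
  · exact h

theorem sum_extHeadCount (Z : Finset (D ⊕ E × V)) (W : Finset V) :
    ∑ v ∈ W, extHeadCount hd Z v = #{x ∈ Z | extHead hd x ∈ W} := by
  rw [card_eq_sum_card_fiberwise (s := {x ∈ Z | extHead hd x ∈ W}) (t := W) (f := extHead hd)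
    fun x hx => (mem_filter.1 hx).2]
  refine sum_congr rfl fun v hv => ?_
  rw [extHeadCount, filter_filter]
  exact congrArg card (filter_congr fun x _ => by constructor <;> grind)

variable [Fintype E] [Fintype D]

variable (ε tl hd) in
/-- `e_{ℰ∪𝒜}(𝒫)`. -/
def enteringCount (P : Finset (Finset V)) : ℕ :=
  (univ.filter fun e : E => ∃ X ∈ P, hypEnters (ε e) X).card +
    (univ.filter fun d : D => ∃ X ∈ P, dypEnters (tl d, hd d) X).card

variable (ε tl hd) in
theorem card_filter_classEnters (P : Finset (Finset V)) :
    #(univ.filter fun c => ∃ X ∈ P, ClassEnters ε tl hd c X) = enteringCount ε tl hd P := by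
  rw [enteringCount, card_filter, card_filter, card_filter, Fintype.sum_sum_type, add_comm]
  rfl

variable [Fintype V]

theorem extUnder_eq_insert {x : D ⊕ E × V} (hx : x ∈ extGround ε) :
    extUnder ε tl hd x = insert (extHead hd x) (extTail ε tl x) := by
  rcases x with d | ⟨e, y⟩
  · rfl
  · exact (insert_erase (show y ∈ ε e by simpa [extGround] using hx)).symm

theorem classEnters_classOf {x : D ⊕ E × V} (hx : x ∈ extGround ε) {X : Finset V}
    (h : dypEnters (extTail ε tl x, extHead hd x) X) : ClassEnters ε tl hd (classOf x) X := by
  rcases x with d | ⟨e, y⟩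
  · exact h
  · obtain ⟨hyX, w, hw⟩ := h
    simp only [extTail, Sum.elim_inr, mem_sdiff, mem_erase] at hw
    exact ⟨⟨y, mem_inter.2 ⟨by simpa [extGround] using hx, hyX⟩⟩, w, mem_sdiff.2 ⟨hw.1.2, hw.2⟩⟩

theorem ClassEnters.exists_classOf_eq {c : D ⊕ E} {X : Finset V}
    (h : ClassEnters ε tl hd c X) :
    ∃ x ∈ extGround ε, classOf x = c ∧ extHead hd x ∈ X := by
  rcases c with d | e
  · exact ⟨Sum.inl d, by simp [extGround], rfl, h.1⟩
  · obtain ⟨y, hy⟩ := h.1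
    exact ⟨Sum.inr (e, y), by simp [extGround, (mem_inter.1 hy).1], rfl, (mem_inter.1 hy).2⟩

variable (ε tl hd)

def rootCapacity (f g : V → ℕ) (k l' : ℕ) (P : Finset (Finset V)) : ℤ :=
  min ((l' : ℤ) - ∑ v ∈ univ \ P.biUnion id, (f v : ℤ)) (∑ v ∈ P.biUnion id, (min k (g v) : ℤ))

def SubpartitionCondition (f g : V → ℕ) (k l' : ℕ) : Prop :=
  ∀ P : Finset (Finset V), IsSubpartition P →
    (k : ℤ) * #P - rootCapacity f g k l' P ≤ enteringCount ε tl hd P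

variable {ε tl hd} {k : ℕ}

theorem extIndep_iff {I : Finset (D ⊕ E × V)} :
    ExtIndep k ε tl hd I ↔ I ⊆ extGround ε ∧ Set.InjOn classOf (I : Set (D ⊕ E × V)) ∧
      ∃ col : D ⊕ E × V → Fin k, ∀ i, IsHyperforest (extUnder ε tl hd) {x ∈ I | col x = i} := by
  rw [ExtIndep, injOn_classOf_iff]
  refine and_congr_right' (and_congr_right' (exists_congr fun col => ⟨?_, ?_⟩))
  · intro h i J' hJ' hne
    exact h J' (hJ'.trans (filter_subset _ _)) hne ⟨i, fun z hz => (mem_filter.1 (hJ' hz)).2⟩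
  · rintro h J' hJ' hne ⟨i, hi⟩
    exact h i J' (fun z hz => mem_filter.2 ⟨hJ' hz, hi z hz⟩) hne

theorem extRank_eq_rankOf : extRank k ε tl hd = rankOf (ExtIndep k ε tl hd) := by
  funext Y
  refine le_antisymm (Finset.sup_le fun I hI => ?_) (rankOf_le_iff.2 fun I hI hi => ?_)
  · split_ifs with hi
    exacts [card_le_rankOf hi (mem_powerset.1 hI), Nat.zero_le _]
  · exact le_sup_of_le (mem_powerset.2 hI) (by simp [hi])

variable [DecidableEq E] [DecidableEq D]

theorem card_le_extRank_of_colouring {Y : Finset (D ⊕ E × V)} (hY : Y ⊆ extGround ε)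
    {J : Finset (D ⊕ E)} (hJ : J ⊆ Y.image classOf) (col : D ⊕ E → Fin k)
    (hcol : ∀ i, IsHyperforest (classUnder ε tl hd) {c ∈ J | col c = i}) :
    #J ≤ extRank k ε tl hd Y := by
  have hsurj : Set.SurjOn classOf (Y : Set (D ⊕ E × V)) (J : Set (D ⊕ E)) := fun c hc => by
    obtain ⟨x, hx, rfl⟩ := mem_image.1 (hJ hc)
    exact ⟨x, hx, rfl⟩
  obtain ⟨I, hIY, hinj, rfl⟩ := exists_subset_injOn_image_eq_of_surjOn _ J hsurj
  rw [card_image_of_injOn hinj, extRank_eq_rankOf]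
  refine card_le_rankOf (extIndep_iff.2 ⟨(coe_subset.1 hIY).trans hY, hinj, col ∘ classOf,
    fun i => ?_⟩) (coe_subset.1 hIY)
  rw [funext extUnder_eq_classUnder]
  refine IsHyperforest.comp_of_injOn (hinj.mono (coe_subset.2 (filter_subset _ _))) ?_
  have := hcol i
  rw [filter_image] at this
  exact this

theorem extRank_le_of_forall_enters_or_subset {P : Finset (Finset V)} {Y : Finset (D ⊕ E × V)}
    (hY : ∀ x ∈ Y, ∃ X ∈ P,
      dypEnters (extTail ε tl x, extHead hd x) X ∨ extUnder ε tl hd x ⊆ X) :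
    extRank k ε tl hd Y ≤ k * ∑ X ∈ P, (#X - 1) + enteringCount ε tl hd P := by
  rw [extRank_eq_rankOf]
  refine rankOf_le_iff.2 fun I hIY hI => ?_
  obtain ⟨hIg, hinj, col, hcol⟩ := extIndep_iff.1 hI
  have hinside : #{x ∈ I | ∃ X ∈ P, extUnder ε tl hd x ⊆ X} ≤ k * ∑ X ∈ P, (#X - 1) := by
    calc #{x ∈ I | ∃ X ∈ P, extUnder ε tl hd x ⊆ X}
        = ∑ i, #{x ∈ {x ∈ I | col x = i} | ∃ X ∈ P, extUnder ε tl hd x ⊆ X} := by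
          rw [card_eq_sum_card_fiberwise (f := col) (t := univ) fun _ _ => mem_univ _]
          simp only [filter_filter, and_comm]
      _ ≤ ∑ _i : Fin k, ∑ X ∈ P, (#X - 1) :=
          sum_le_sum fun i _ => (hcol i).card_filter_exists_subset_le P
      _ = k * ∑ X ∈ P, (#X - 1) := by simp
  have hcross : #{x ∈ I | ¬ ∃ X ∈ P, extUnder ε tl hd x ⊆ X} ≤ enteringCount ε tl hd P := by
    rw [← card_filter_classEnters,
      ← card_image_of_injOn (hinj.mono (coe_subset.2 (filter_subset _ _)))]
    refine card_le_card fun c hc => ?_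
    obtain ⟨x, hx, rfl⟩ := mem_image.1 hc
    rw [mem_filter] at hx
    obtain ⟨X, hX, hent | hsub⟩ := hY x (hIY hx.1)
    · exact mem_filter.2 ⟨mem_univ _, X, hX, classEnters_classOf (hIg hx.1) hent⟩
    · exact absurd ⟨X, hX, hsub⟩ hx.2
  have := card_filter_add_card_filter_not (s := I) fun x => ∃ X ∈ P, extUnder ε tl hd x ⊆ X
  omega

theorem enteringCount_le {P Q : Finset (Finset V)} (hP : IsSubpartition P) (hQP : Q ⊆ P)
    (Z : Finset (D ⊕ E × V)) :
    enteringCount ε tl hd Q ≤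
      #{c ∈ (extGround ε \ Z).image classOf | ∀ X ∈ P, ¬ classUnder ε tl hd c ⊆ X} +
        #{x ∈ Z | extHead hd x ∈ Q.biUnion id} := by
  rw [← card_filter_classEnters]
  refine (card_le_card fun c hc => ?_).trans
    ((card_union_le _ _).trans (Nat.add_le_add_left (card_image_le (f := classOf)) _))
  obtain ⟨X, hXQ, hcX⟩ := (mem_filter.1 hc).2
  obtain ⟨x, hxg, rfl, hxX⟩ := ClassEnters.exists_classOf_eq hcX
  by_cases hxZ : x ∈ Z
  · exact mem_union_right _ (mem_image_of_mem _ (mem_filter.2 ⟨hxZ, mem_biUnion.2 ⟨X, hXQ, hxX⟩⟩))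
  · exact mem_union_left _ (mem_filter.2 ⟨mem_image_of_mem _ (mem_sdiff.2 ⟨hxg, hxZ⟩),
      fun Y hY => hP.not_subset_of_hypEnters (hQP hXQ) hY (ClassEnters.hypEnters hcX)⟩)

variable {f g : V → ℕ} {l' : ℕ}

/-- The parts of `P` on which `d_Z + φ ≤ k` everywhere form a subpartition to which the condition
applies; every other part contains a vertex where `min (d_Z v) (k - φ v) = k - φ v`. -/
theorem mul_card_le_of_subpartitionCondition (hii : SubpartitionCondition ε tl hd f g k l')
    (Z : Finset (D ⊕ E × V)) (φ : V → ℕ) (hφ : ∀ v, φ v ≤ k) (M : ℤ)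
    (hM : ∀ Q R, Disjoint R (Q.biUnion id) → rootCapacity f g k l' Q + ∑ v ∈ R, (φ v : ℤ) ≤ M)
    {P : Finset (Finset V)} (hP : IsSubpartition P) :
    (k : ℤ) * #P ≤ M + ∑ v, min (extHeadCount hd Z v : ℤ) (k - φ v) +
      #{c ∈ (extGround ε \ Z).image classOf | ∀ X ∈ P, ¬ classUnder ε tl hd c ⊆ X} := by
  set d := extHeadCount hd Z
  set Q := {X ∈ P | ∀ v ∈ X, d v + φ v ≤ k}
  have hQP : Q ⊆ P := filter_subset _ _
  have hbad : ∀ X ∈ P \ Q, ∃ v ∈ X, k < d v + φ v := fun X hX => by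
    simp only [Q, mem_sdiff, mem_filter, not_and, not_forall, not_le] at hX
    obtain ⟨v, hv, hlt⟩ := hX.2 hX.1
    exact ⟨v, hv, hlt⟩
  obtain ⟨R, hRcard, hR⟩ := (hP.subset sdiff_subset).exists_card_eq hbad
  have hRQ : Disjoint R (Q.biUnion id) := disjoint_left.2 fun v hvR hvQ => by
    obtain ⟨Y, hY, hvY⟩ := mem_biUnion.1 hvQ
    have := (mem_filter.1 hY).2 _ hvY
    have := hR v hvR
    omega
  have hminR : ∑ v ∈ R, min (d v : ℤ) (k - φ v) = k * #R - ∑ v ∈ R, (φ v : ℤ) := by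
    rw [sum_congr rfl fun v hv => min_eq_right (b := (k : ℤ) - φ v) ?_, sum_sub_distrib, sum_const,
      nsmul_eq_mul, mul_comm]
    have := hR v hv
    omega
  have hminQ : ∑ v ∈ Q.biUnion id, min (d v : ℤ) (k - φ v) =
      #{x ∈ Z | extHead hd x ∈ Q.biUnion id} := by
    rw [← sum_extHeadCount, Nat.cast_sum]
    refine sum_congr rfl fun v hv => min_eq_left ?_
    obtain ⟨Y, hY, hvY⟩ := mem_biUnion.1 hv
    have := (mem_filter.1 hY).2 _ hvY
    omega
  have hsplit : ∑ v ∈ Q.biUnion id, min (d v : ℤ) (k - φ v) + ∑ v ∈ R, min (d v : ℤ) (k - φ v) ≤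
      ∑ v, min (d v : ℤ) (k - φ v) := by
    rw [← sum_union hRQ.symm]
    exact sum_le_sum_of_subset_of_nonneg (subset_univ _) fun v _ _ =>
      le_min (Nat.cast_nonneg _) (by have := hφ v; omega)
  have hPQ : (#P : ℤ) = #R + #Q := by
    rw [hRcard]
    exact_mod_cast (card_sdiff_add_card_eq_card hQP).symm
  have h₁ := hii Q (hP.subset hQP)
  have h₂ : (enteringCount ε tl hd Q : ℤ) ≤ _ := Nat.cast_le.2 (enteringCount_le hP hQP Z)
  have h₃ := hM Q R hRQ
  push_cast at h₂
  rw [hPQ, mul_add]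
  linarith

/-- Both rank conditions are instances, with `(φ, M) = (g_k, g_k(V))` and `(φ, M) = (f, ℓ')`. -/
theorem le_extRank_of_subpartitionCondition (hε : ∀ e, (ε e).Nonempty) (hk : 0 < k)
    (hii : SubpartitionCondition ε tl hd f g k l') (Z : Finset (D ⊕ E × V))
    (φ : V → ℕ) (hφ : ∀ v, φ v ≤ k) (M : ℤ)
    (hM : ∀ Q R, Disjoint R (Q.biUnion id) → rootCapacity f g k l' Q + ∑ v ∈ R, (φ v : ℤ) ≤ M) :
    (k : ℤ) * Fintype.card V - M - ∑ v, min (extHeadCount hd Z v : ℤ) (k - φ v) ≤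
      extRank k ε tl hd (extGround ε \ Z) := by
  set t := (k : ℤ) * Fintype.card V - M - ∑ v, min (extHeadCount hd Z v : ℤ) (k - φ v)
  have hne : ∀ c, (classUnder ε tl hd c).Nonempty := fun c => by
    rcases c with d | e
    exacts [insert_nonempty _ _, hε e]
  obtain ⟨J, hJS, htJ, col, hcol⟩ := exists_isHyperforest_colouring hne hk
    ((extGround ε \ Z).image classOf) t.toNat fun P => by
      have h₁ := mul_card_le_of_subpartitionCondition hii Z φ hφ M hM (isSubpartition_parts P)
      have h₂ : #P.parts ≤ Fintype.card V := by simpa using P.card_parts_le_card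
      have h₃ := Nat.mul_le_mul_left k h₂
      zify at h₃ ⊢
      omega
  have := card_le_extRank_of_colouring sdiff_subset hJS col hcol
  omega

variable (ε tl hd) in
theorem exists_extRank_le_enteringCount (k : ℕ) (P : Finset (Finset V)) :
    ∃ Z ⊆ extGround ε, extRank k ε tl hd (extGround ε \ Z) ≤
      k * ∑ X ∈ P, (#X - 1) + enteringCount ε tl hd P ∧
        ∀ v ∈ P.biUnion id, extHeadCount hd Z v = 0 := by
  set Y : Finset (D ⊕ E × V) := {x ∈ extGround ε | ∃ X ∈ P,
    dypEnters (extTail ε tl x, extHead hd x) X ∨ extUnder ε tl hd x ⊆ X}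
  refine ⟨extGround ε \ Y, sdiff_subset, ?_, fun v hv => ?_⟩
  · rw [Finset.sdiff_sdiff_eq_self (filter_subset _ _)]
    exact extRank_le_of_forall_enters_or_subset fun x hx => (mem_filter.1 hx).2
  · obtain ⟨X, hX, hvX⟩ := mem_biUnion.1 hv
    rw [extHeadCount, card_eq_zero, filter_eq_empty_iff]
    rintro x hx rfl
    obtain ⟨hxg, hxY⟩ := mem_sdiff.1 hx
    refine hxY (mem_filter.2 ⟨hxg, X, hX, or_iff_not_imp_left.2 fun hent => ?_⟩)
    rw [extUnder_eq_insert hxg]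
    exact insert_subset hvX fun w hw => by_contra fun hwX => hent ⟨hvX, w, mem_sdiff.2 ⟨hw, hwX⟩⟩

theorem rootCapacity_add_sum_min_le {Q : Finset (Finset V)} {R : Finset V}
    (hRQ : Disjoint R (Q.biUnion id)) :
    rootCapacity f g k l' Q + ∑ v ∈ R, ((min k (g v) : ℕ) : ℤ) ≤ ∑ v, ((min k (g v) : ℕ) : ℤ) := by
  have := sum_le_sum_of_subset_of_nonneg (subset_univ (Q.biUnion id ∪ R))
    fun v _ _ => Nat.cast_nonneg (α := ℤ) (min k (g v))
  rw [sum_union hRQ.symm] at this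
  have := min_le_right ((l' : ℤ) - ∑ v ∈ univ \ Q.biUnion id, (f v : ℤ))
    (∑ v ∈ Q.biUnion id, (min k (g v) : ℤ))
  push_cast at *
  rw [rootCapacity]
  linarith

theorem rootCapacity_add_sum_le {Q : Finset (Finset V)} {R : Finset V}
    (hRQ : Disjoint R (Q.biUnion id)) : rootCapacity f g k l' Q + ∑ v ∈ R, (f v : ℤ) ≤ l' := by
  have := sum_le_sum_of_subset_of_nonneg (fun v hv => mem_sdiff.2 ⟨mem_univ v,
    disjoint_left.1 hRQ hv⟩) fun v _ _ => Nat.cast_nonneg (α := ℤ) (f v)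
  have := min_le_left ((l' : ℤ) - ∑ v ∈ univ \ Q.biUnion id, (f v : ℤ))
    (∑ v ∈ Q.biUnion id, (min k (g v) : ℤ))
  rw [rootCapacity]
  linarith

variable (ε tl hd) in
def RankConditions (f g : V → ℕ) (k l' : ℕ) : Prop :=
  ∀ Z : Finset (D ⊕ E × V), Z ⊆ extGround ε →
    (∑ v : V, max 0 ((k : ℤ) - min (k : ℤ) (g v) - extHeadCount hd Z v)
        ≤ (extRank k ε tl hd (extGround ε \ Z) : ℤ)) ∧
    ((k : ℤ) * Fintype.card V - l' - ∑ v : V, min ((extHeadCount hd Z v : ℤ)) ((k : ℤ) - f v)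
        ≤ (extRank k ε tl hd (extGround ε \ Z) : ℤ))

/-- With `𝒵` the ground elements that neither enter nor lie inside a member of `P`, the two rank
conditions give `k|P| - g_k(∪P) ≤ e(P)` and `k|P| - ℓ' + f(V - ∪P) ≤ e(P)`. -/
theorem subpartitionCondition_of_rankConditions (hfk : ∀ v, f v ≤ k)
    (hi : RankConditions ε tl hd f g k l') : SubpartitionCondition ε tl hd f g k l' := by
  intro P hP
  obtain ⟨Z, hZ, hrank, hZP⟩ := exists_extRank_le_enteringCount ε tl hd k P
  obtain ⟨h₁, h₂⟩ := hi Z hZ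
  have h₁' := sum_le_sum_max_sub (a := fun v => (k : ℤ) - min (k : ℤ) (g v))
    (fun v => sub_nonneg.2 (min_le_left _ _)) hZP
  have h₂' := sum_min_le_sum_sdiff (a := fun v => (k : ℤ) - f v)
    (fun v => sub_nonneg.2 (Nat.cast_le.2 (hfk v))) hZP
  simp only [sum_sub_distrib, sum_const, nsmul_eq_mul] at h₁' h₂'
  have hW := sum_card_sub_one_add_card hP.1
  rw [← hP.card_biUnion] at hW
  have hV := card_sdiff_add_card_eq_card (subset_univ (P.biUnion id))
  rw [card_univ] at hV
  zify at hrank hW hV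
  have hkW := congrArg ((k : ℤ) * ·) hW
  have hkV := congrArg ((k : ℤ) * ·) hV
  simp only [mul_add] at hkW hkV
  rw [rootCapacity, sub_le_iff_le_add, ← sub_le_iff_le_add', le_min_iff]
  constructor <;> linarith

theorem rankConditions_of_subpartitionCondition (hε : ∀ e, (ε e).Nonempty) (hk : 0 < k)
    (hfk : ∀ v, f v ≤ k) (hii : SubpartitionCondition ε tl hd f g k l') :
    RankConditions ε tl hd f g k l' := by
  intro Z _
  refine ⟨?_, le_extRank_of_subpartitionCondition hε hk hii Z f hfk l' fun Q R hRQ =>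
    rootCapacity_add_sum_le hRQ⟩
  refine le_of_eq_of_le ?_ (le_extRank_of_subpartitionCondition hε hk hii Z (min k <| g ·)
    (fun v => min_le_left _ _) _ fun Q R hRQ => rootCapacity_add_sum_min_le hRQ)
  rw [mul_comm, ← card_univ, ← nsmul_eq_mul, ← sum_const, ← sum_sub_distrib, ← sum_sub_distrib]
  exact sum_congr rfl fun v _ => by push_cast; omega

end MixedHypergraph

theorem rank_conditions_iff_subpartition_condition_general
    (V : Type) [Fintype V] [DecidableEq V]
    (E D : Type) [Fintype E] [Fintype D] [DecidableEq E] [DecidableEq D]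
    (ε : E → Finset V) (hε : ∀ e, 2 ≤ (ε e).card)
    (tl : D → Finset V) (hd : D → V)
    (f g : V → ℕ) (k l' : ℕ) (hk : 0 < k)
    (hfg : ∀ v : V, f v ≤ min k (g v)) :
    (∀ Z : Finset (D ⊕ E × V), Z ⊆ extGround ε →
        (∑ v : V, max 0 ((k : ℤ) - min (k : ℤ) (g v) - extHeadCount hd Z v)
            ≤ (extRank k ε tl hd (extGround ε \ Z) : ℤ)) ∧
        ((k : ℤ) * Fintype.card V - l' -
              ∑ v : V, min ((extHeadCount hd Z v : ℤ)) ((k : ℤ) - f v)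
            ≤ (extRank k ε tl hd (extGround ε \ Z) : ℤ))) ↔
    (∀ P : Finset (Finset V), IsSubpartition P →
        (k : ℤ) * P.card -
            min ((l' : ℤ) - ∑ v ∈ Finset.univ \ P.biUnion id, (f v : ℤ))
              (∑ v ∈ P.biUnion id, (min k (g v) : ℤ))
          ≤ ((Finset.univ.filter fun e : E => ∃ X ∈ P, hypEnters (ε e) X).card +
              (Finset.univ.filter fun d : D => ∃ X ∈ P, dypEnters (tl d, hd d) X).card
                : ℤ)) := by
  have hfk : ∀ v, f v ≤ k := fun v => (hfg v).trans (min_le_left _ _)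
  exact ⟨subpartitionCondition_of_rankConditions hfk, rankConditions_of_subpartitionCondition
    (fun e => card_pos.1 (by have := hε e; omega)) hk hfk⟩

/-- Lemma (c) of the paper: for a mixed hypergraph `ℱ = (V, ℰ ∪ 𝒜)`, functions
`f, g : V → ℕ` with `min{k, g(v)} ≥ f(v)`, positive integers `k, ℓ, ℓ'` and the
rank function `r` of the extended `k`-hypergraphic matroid `M_ℱ^k` on
`𝒜 ∪ 𝒜_ℰ`, the two conditions (i) (inequalities (19) and (20) for every
`𝒵 ⊆ 𝒜 ∪ 𝒜_ℰ`) and (ii) (the subpartition condition (18)) are equivalent. -/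
theorem rank_conditions_iff_subpartition_condition
    (V : Type) [Fintype V] [DecidableEq V]
    (E D : Type) [Fintype E] [Fintype D] [DecidableEq E] [DecidableEq D]
    (ε : E → Finset V) (hε : ∀ e, 2 ≤ (ε e).card)
    (tl : D → Finset V) (hd : D → V) (hD : ∀ d, (tl d).Nonempty ∧ hd d ∉ tl d)
    (f g : V → ℕ) (k l l' : ℕ) (hk : 0 < k) (hl : 0 < l) (hl' : 0 < l')
    (hfg : ∀ v : V, f v ≤ min k (g v)) :
    (∀ Z : Finset (D ⊕ E × V), Z ⊆ extGround ε →
        (∑ v : V, max 0 ((k : ℤ) - min (k : ℤ) (g v) - extHeadCount hd Z v)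
            ≤ (extRank k ε tl hd (extGround ε \ Z) : ℤ)) ∧
        ((k : ℤ) * Fintype.card V - l' -
              ∑ v : V, min ((extHeadCount hd Z v : ℤ)) ((k : ℤ) - f v)
            ≤ (extRank k ε tl hd (extGround ε \ Z) : ℤ))) ↔
    (∀ P : Finset (Finset V), IsSubpartition P →
        (k : ℤ) * P.card -
            min ((l' : ℤ) - ∑ v ∈ Finset.univ \ P.biUnion id, (f v : ℤ))
              (∑ v ∈ P.biUnion id, (min k (g v) : ℤ))
          ≤ ((Finset.univ.filter fun e : E => ∃ X ∈ P, hypEnters (ε e) X).card +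
              (Finset.univ.filter fun d : D => ∃ X ∈ P, dypEnters (tl d, hd d) X).card
                : ℤ)) :=
  rank_conditions_iff_subpartition_condition_general V E D ε hε tl hd f g k l' hk hfg

end ArborPaper
end
end
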